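/- arXiv:1310.0324 — 11 statements merged into one kernel-verified Lean document; each statement's English description precedes it below -/
import Mathlib

section
/- Let θ ∈ SL₂(ℤ) with trace(θ) ∈ {−1, 1}. Then the centralizer of θ in GL₂(ℤ) is exactly the set {I₂, −I₂, θ, −θ, θ², −θ²}; that is, S(θ) := {χ ∈ GL₂(ℤ) : χθ = θχ} = {±I₂, ±θ, ±θ²}, a cyclic group of order 6. -/
/-!
A matrix `χ` commutes with `θ` exactly when the cross product of the coordinates
`(b, c, a - d)` of the traceless parts of `χ` and `θ` vanishes. Since
`tr θ ^ 2 - 4 det θ = -3` is squarefree, these coordinates of `θ` are coprime, so Bézout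
forces every such `χ` into `ℤ[θ] = ℤ • 1 + ℤ • θ`, where
`det (x • 1 + y • θ) = x ^ 2 + t x y + y ^ 2` with `t = tr θ`. Replacing `θ` by `-θ` we may
take `t = 1`; then `θ ^ 2 = θ - 1`, so `ℤ[θ]` is the ring of Eisenstein integers, whose six
units `±1, ±θ, ±θ ^ 2` are the powers of `θ`, as `θ ^ 3 = -1`.
-/

open Matrix

theorem exists_dotProduct_eq_one {R ι : Type*} [CommRing R] [IsPrincipalIdealRing R]
    [Fintype ι] {v : ι → R} (h : ∀ d, (∀ i, d ∣ v i) → IsUnit d) : ∃ u, v ⬝ᵥ u = 1 := by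
  set I := Ideal.span (Set.range v)
  have hI : I = ⊤ := by
    rw [← Ideal.span_singleton_generator I, Ideal.span_singleton_eq_top]
    exact h _ fun i ↦ (Submodule.IsPrincipal.mem_iff_generator_dvd I).mp
      (Ideal.subset_span ⟨i, rfl⟩)
  obtain ⟨u, hu⟩ :=
    Ideal.mem_span_range_iff_exists_fun.mp (hI ▸ Submodule.mem_top : (1 : R) ∈ I)
  exact ⟨u, by simpa [dotProduct, mul_comm] using hu⟩

namespace Matrix

variable {R : Type*} [CommRing R]

/-- The traceless part of `A`, with its diagonal doubled so that no `2⁻¹` is needed. -/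
def tracelessCoords (A : Matrix (Fin 2) (Fin 2) R) : Fin 3 → R :=
  ![A 0 1, A 1 0, A 0 0 - A 1 1]

theorem commute_iff_cross_tracelessCoords_eq_zero {A B : Matrix (Fin 2) (Fin 2) R} :
    Commute A B ↔ tracelessCoords A ⨯₃ tracelessCoords B = 0 := by
  simp only [Commute, SemiconjBy, ← Matrix.ext_iff, Fin.forall_fin_two, mul_apply,
    Fin.sum_univ_two, tracelessCoords, cross_apply, cons_val, cons_eq_zero_iff, zero_empty,
    and_true]
  constructor
  · rintro ⟨⟨h₀₀, h₀₁⟩, h₁₀, -⟩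
    exact ⟨by linear_combination h₁₀, by linear_combination h₀₁, by linear_combination h₀₀⟩
  · rintro ⟨h₀, h₁, h₂⟩
    exact ⟨⟨by linear_combination h₂, by linear_combination h₁⟩,
      by linear_combination h₀, by linear_combination -h₂⟩

theorem eq_smul_of_cross_eq_zero {u v w : Fin 3 → R} (hu : v ⬝ᵥ u = 1) (h : v ⨯₃ w = 0) :
    w = (u ⬝ᵥ w) • v := by
  have := cross_cross_eq_smul_sub_smul' u v w
  rwa [h, map_zero, hu, one_smul, eq_comm, sub_eq_zero, eq_comm] at this

theorem tracelessCoords_smul_one_add_smul (x y : R) (A : Matrix (Fin 2) (Fin 2) R) :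
    tracelessCoords (x • 1 + y • A) = y • tracelessCoords A := by
  ext i
  fin_cases i <;> simp [tracelessCoords, mul_sub]

theorem det_smul_one_add_smul (x y : R) (A : Matrix (Fin 2) (Fin 2) R) :
    (x • 1 + y • A).det = x ^ 2 + x * y * A.trace + y ^ 2 * A.det := by
  simp only [det_fin_two, trace_fin_two, add_apply, smul_apply, smul_eq_mul, one_apply_eq,
    one_apply_ne zero_ne_one, one_apply_ne one_ne_zero]
  ring

theorem sq_eq_trace_smul_sub_det_smul (A : Matrix (Fin 2) (Fin 2) R) :
    A ^ 2 = A.trace • A - A.det • 1 := by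
  ext i j
  fin_cases i <;> fin_cases j <;>
    simp only [Fin.zero_eta, Fin.mk_one, sq, mul_apply, Fin.sum_univ_two, trace_fin_two,
      det_fin_two, sub_apply, smul_apply, smul_eq_mul, one_apply_eq, one_apply_ne zero_ne_one,
      one_apply_ne one_ne_zero] <;>
    ring

theorem mul_self_dvd_discr {A : Matrix (Fin 2) (Fin 2) R} {d : R}
    (hd : ∀ i, d ∣ tracelessCoords A i) : d * d ∣ A.trace ^ 2 - 4 * A.det := by
  obtain ⟨⟨b, hb⟩, ⟨c, hc⟩, ⟨e, he⟩⟩ := And.intro (hd 0) (And.intro (hd 1) (hd 2))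
  simp only [tracelessCoords, cons_val] at hb hc he
  refine ⟨e ^ 2 + 4 * b * c, ?_⟩
  rw [trace_fin_two, det_fin_two]
  linear_combination (A 0 0 - A 1 1 + d * e) * he + 4 * (A 1 0) * hb + 4 * d * b * hc

variable {u : Fin 3 → R} {A : Matrix (Fin 2) (Fin 2) R}

theorem exists_eq_smul_one_add_smul_of_commute (hu : tracelessCoords A ⬝ᵥ u = 1)
    {B : Matrix (Fin 2) (Fin 2) R} (h : Commute A B) : ∃ x y : R, B = x • 1 + y • A := by
  obtain ⟨y, hB⟩ : ∃ y, tracelessCoords B = y • tracelessCoords A :=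
    ⟨_, eq_smul_of_cross_eq_zero hu (commute_iff_cross_tracelessCoords_eq_zero.mp h)⟩
  have h₀ := congrFun hB 0
  have h₁ := congrFun hB 1
  have h₂ := congrFun hB 2
  simp only [tracelessCoords, cons_val, Pi.smul_apply, smul_eq_mul] at h₀ h₁ h₂
  refine ⟨B 0 0 - y * A 0 0, y, ?_⟩
  ext i j
  fin_cases i <;> fin_cases j <;>
    simp only [Fin.zero_eta, Fin.mk_one, add_apply, smul_apply, smul_eq_mul, one_apply_eq,
      one_apply_ne zero_ne_one, one_apply_ne one_ne_zero, mul_one, mul_zero, zero_add,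
      sub_add_cancel]
  · linear_combination h₀
  · linear_combination h₁
  · linear_combination -h₂

theorem smul_one_add_smul_injective (hu : tracelessCoords A ⬝ᵥ u = 1) :
    Function.Injective fun p : R × R => p.1 • 1 + p.2 • A := by
  rintro ⟨x, y⟩ ⟨x', y'⟩ h
  have hv := congrArg tracelessCoords h
  simp only [tracelessCoords_smul_one_add_smul] at hv
  have hy : y = y' := by
    simpa [smul_dotProduct, hu] using congrArg (· ⬝ᵥ u) hv
  subst hy
  simpa using congrFun (congrFun h 0) 0

theorem setOf_isUnit_det_commute_eq_image (hu : tracelessCoords A ⬝ᵥ u = 1) :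
    {B | IsUnit B.det ∧ Commute B A} = (fun p : R × R => p.1 • 1 + p.2 • A) ''
      {p | IsUnit (p.1 ^ 2 + p.1 * p.2 * A.trace + p.2 ^ 2 * A.det)} := by
  ext B
  constructor
  · rintro ⟨hdet, hc⟩
    obtain ⟨x, y, rfl⟩ := exists_eq_smul_one_add_smul_of_commute hu hc.symm
    exact ⟨(x, y), show IsUnit _ by rwa [← det_smul_one_add_smul], rfl⟩
  · rintro ⟨⟨x, y⟩, hunit, rfl⟩
    refine ⟨by rwa [det_smul_one_add_smul], ?_⟩
    exact ((Commute.one_left A).smul_left x).add_left ((Commute.refl A).smul_left y)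

theorem exists_dotProduct_tracelessCoords_eq_one [IsPrincipalIdealRing R]
    (h : Squarefree (A.trace ^ 2 - 4 * A.det)) : ∃ u, tracelessCoords A ⬝ᵥ u = 1 :=
  exists_dotProduct_eq_one fun _ hd ↦ h _ (mul_self_dvd_discr hd)

end Matrix

section signedPowers

variable {α : Type*} [Ring α]

def signedPowers (g : α) : Set α := {1, -1, g, -g, g ^ 2, -g ^ 2}

theorem signedPowers_neg (g : α) : signedPowers (-g) = signedPowers g := by
  simp only [signedPowers, neg_neg, neg_sq]
  rw [Set.insert_comm (-g) g]

theorem signedPowers_eq_setOf_pow {g : α} (h : g ^ 3 = -1) :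
    signedPowers g = {x | ∃ n : ℕ, x = g ^ n} := by
  ext x
  constructor
  · rintro (rfl | rfl | rfl | rfl | rfl | rfl)
    exacts [⟨0, (pow_zero g).symm⟩, ⟨3, h.symm⟩, ⟨1, (pow_one _).symm⟩,
      ⟨4, by rw [pow_succ, h, neg_one_mul]⟩, ⟨2, rfl⟩,
      ⟨5, by rw [(by norm_num : 5 = 3 + 2), pow_add, h, neg_one_mul]⟩]
  · rintro ⟨n, rfl⟩
    rw [← Nat.div_add_mod n 3, pow_add, pow_mul, h]
    have hr := Nat.mod_lt n (show 3 > 0 by norm_num)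
    rcases neg_one_pow_eq_or α (n / 3) with h1 | h1 <;> rw [h1] <;>
      interval_cases n % 3 <;> simp [signedPowers]

theorem pow_three_eq_neg_one_of_sq_eq_sub_one {g : α} (h : g ^ 2 = g - 1) : g ^ 3 = -1 := by
  rw [pow_succ, h, sub_mul, one_mul, ← sq, h]
  abel

end signedPowers

/-- The coordinates `(x, y)` of the units `x + y ζ` of `ℤ[ζ]`, where `ζ ^ 2 = ζ - 1`. -/
def eisensteinUnitCoords : Set (ℤ × ℤ) := {(1, 0), (-1, 0), (0, 1), (0, -1), (-1, 1), (1, -1)}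

theorem setOf_isUnit_sq_add_mul_add_sq :
    {p : ℤ × ℤ | IsUnit (p.1 ^ 2 + p.1 * p.2 + p.2 ^ 2)} = eisensteinUnitCoords := by
  ext ⟨x, y⟩
  simp only [Set.mem_ofPred_eq, Int.isUnit_iff, eisensteinUnitCoords, Set.mem_insert_iff,
    Set.mem_singleton_iff, Prod.mk.injEq]
  constructor
  · intro h
    have hnorm : x ^ 2 + x * y + y ^ 2 = 1 := by
      rcases h with h | h
      · exact h
      · nlinarith [sq_nonneg (x + y), sq_nonneg x, sq_nonneg y]
    have hx : -1 ≤ x ∧ x ≤ 1 := by constructor <;> nlinarith [sq_nonneg (x + 2 * y)]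
    have hy : -1 ≤ y ∧ y ≤ 1 := by constructor <;> nlinarith [sq_nonneg (2 * x + y)]
    obtain ⟨hx₁, hx₂⟩ := hx
    obtain ⟨hy₁, hy₂⟩ := hy
    interval_cases x <;> interval_cases y <;> simp_all
  · rintro (⟨rfl, rfl⟩ | ⟨rfl, rfl⟩ | ⟨rfl, rfl⟩ | ⟨rfl, rfl⟩ | ⟨rfl, rfl⟩ | ⟨rfl, rfl⟩) <;>
      norm_num

theorem image_eisensteinUnitCoords {α : Type*} [Ring α] {g : α} (h : g ^ 2 = g - 1) :
    (fun p : ℤ × ℤ => p.1 • (1 : α) + p.2 • g) '' eisensteinUnitCoords = signedPowers g := by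
  simp [eisensteinUnitCoords, Set.image_insert_eq, signedPowers, h, neg_add_eq_sub,
    ← sub_eq_add_neg]

namespace Matrix

theorem sq_eq_self_sub_one_of_det_of_trace {R : Type*} [CommRing R]
    {A : Matrix (Fin 2) (Fin 2) R} (hdet : A.det = 1) (htr : A.trace = 1) : A ^ 2 = A - 1 := by
  rw [sq_eq_trace_smul_sub_det_smul, htr, hdet, one_smul, one_smul]

theorem exists_dotProduct_tracelessCoords_eq_one_of_det_of_trace
    {θ : Matrix (Fin 2) (Fin 2) ℤ} (hdet : θ.det = 1) (htr : θ.trace = 1) :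
    ∃ u, tracelessCoords θ ⬝ᵥ u = 1 := by
  apply exists_dotProduct_tracelessCoords_eq_one
  rw [htr, hdet, show (1 : ℤ) ^ 2 - 4 * 1 = -3 by norm_num]
  exact Int.prime_three.neg.squarefree

theorem setOf_isUnit_det_commute_eq_signedPowers {θ : Matrix (Fin 2) (Fin 2) ℤ}
    (hdet : θ.det = 1) (htr : θ.trace = 1) :
    {χ | IsUnit χ.det ∧ Commute χ θ} = signedPowers θ := by
  obtain ⟨u, hu⟩ := exists_dotProduct_tracelessCoords_eq_one_of_det_of_trace hdet htr
  rw [setOf_isUnit_det_commute_eq_image hu, htr, hdet]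
  simp only [mul_one, setOf_isUnit_sq_add_mul_add_sq]
  exact image_eisensteinUnitCoords (sq_eq_self_sub_one_of_det_of_trace hdet htr)

theorem ncard_signedPowers {θ : Matrix (Fin 2) (Fin 2) ℤ} (hdet : θ.det = 1)
    (htr : θ.trace = 1) :
    (signedPowers θ).ncard = 6 := by
  obtain ⟨u, hu⟩ := exists_dotProduct_tracelessCoords_eq_one_of_det_of_trace hdet htr
  rw [← image_eisensteinUnitCoords (sq_eq_self_sub_one_of_det_of_trace hdet htr),
    Set.ncard_image_of_injective _ (smul_one_add_smul_injective hu)]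
  simp [eisensteinUnitCoords, Set.ncard_insert_of_notMem, Set.ncard_singleton]

end Matrix

/-- For θ ∈ SL₂(ℤ) with trace ±1, the centralizer of θ in GL₂(ℤ) is
exactly {±I₂, ±θ, ±θ²}, a cyclic group of order 6 (it has six elements and consists
of the powers of a single element). -/
theorem stmt_5 (θ : Matrix (Fin 2) (Fin 2) ℤ) (hdet : θ.det = 1)
    (htr : θ.trace = -1 ∨ θ.trace = 1) :
    {χ : Matrix (Fin 2) (Fin 2) ℤ | (χ.det = 1 ∨ χ.det = -1) ∧ χ * θ = θ * χ} =
      ({1, -1, θ, -θ, θ ^ 2, -θ ^ 2} : Set (Matrix (Fin 2) (Fin 2) ℤ)) ∧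
    (∃ g : Matrix (Fin 2) (Fin 2) ℤ,
      ({1, -1, θ, -θ, θ ^ 2, -θ ^ 2} : Set (Matrix (Fin 2) (Fin 2) ℤ)) =
        {χ : Matrix (Fin 2) (Fin 2) ℤ | ∃ n : ℕ, χ = g ^ n}) ∧
    ({1, -1, θ, -θ, θ ^ 2, -θ ^ 2} : Set (Matrix (Fin 2) (Fin 2) ℤ)).ncard = 6 := by
  obtain ⟨g, hg, hgdet, hgtr⟩ : ∃ g, (g = θ ∨ g = -θ) ∧ g.det = 1 ∧ g.trace = 1 := by
    rcases htr with htr | htr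
    · exact ⟨-θ, Or.inr rfl, by simp [det_neg, hdet], by simp [htr]⟩
    · exact ⟨θ, Or.inl rfl, hdet, htr⟩
  have hS : ({1, -1, θ, -θ, θ ^ 2, -θ ^ 2} : Set _) = signedPowers g := by
    rcases hg with rfl | rfl
    exacts [rfl, (signedPowers_neg θ).symm]
  have hcomm : ∀ χ, χ * θ = θ * χ ↔ Commute χ g := by
    rcases hg with rfl | rfl
    · exact fun _ ↦ Iff.rfl
    · exact fun _ ↦ Commute.neg_right_iff.symm
  have hcube :=
    pow_three_eq_neg_one_of_sq_eq_sub_one (sq_eq_self_sub_one_of_det_of_trace hgdet hgtr)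
  rw [hS]
  refine ⟨?_, ⟨g, signedPowers_eq_setOf_pow hcube⟩, ncard_signedPowers hgdet hgtr⟩
  simp only [← setOf_isUnit_det_commute_eq_signedPowers hgdet hgtr, Int.isUnit_iff, hcomm]
end

section
/- Let θ ∈ SL₂(ℤ) with t := trace(θ) ∈ {−1, 0, 1}. Then θ is conjugate in GL₂(ℤ) to the matrix [[t, 1], [−1, 0]]; that is, there exists U ∈ GL₂(ℤ) such that U θ U⁻¹ = [[t, 1], [−1, 0]]. -/
open Matrix

/-!
Write `θ = [[a, b], [c, d]]` and `t = tr θ`. For any row vector `w`, the matrix `U` with rows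
`-w θ` and `w` satisfies `U θ = [[t, 1], [-1, 0]] U` by Cayley–Hamilton, and `det U` is the value at
`w` of the binary quadratic form `[b, d - a, -c]`, of discriminant `t² - 4 ∈ {-3, -4}`. A definite
form of discriminant above `-12` is equivalent to a reduced form `[A, B, C]` with `|B| ≤ A ≤ C`,
whence `3 A² ≤ 4 A C - B² < 12` forces `A = ±1`; so some `w` makes `U` invertible over `ℤ`.
-/

theorem Int.exists_abs_sub_two_mul_le {A : ℤ} (hA : 0 < A) (B : ℤ) :
    ∃ q : ℤ, |B - 2 * A * q| ≤ A := by
  have hdiv := Int.emod_add_mul_ediv (B + A) (2 * A)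
  refine ⟨(B + A) / (2 * A), abs_le.mpr ⟨?_, ?_⟩⟩
  · linarith [Int.emod_nonneg (B + A) (by omega : 2 * A ≠ 0)]
  · linarith [Int.emod_lt_of_pos (B + A) (by omega : 0 < 2 * A)]

theorem exists_eq_one_of_four_mul_sub_sq_lt_twelve (A B C : ℤ) (hA : 0 < A)
    (hpos : 0 < 4 * A * C - B ^ 2) (hlt : 4 * A * C - B ^ 2 < 12) :
    ∃ x y : ℤ, A * x ^ 2 + B * x * y + C * y ^ 2 = 1 := by
  obtain ⟨q, hq⟩ := Int.exists_abs_sub_two_mul_le hA B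
  set B' := B - 2 * A * q
  set C' := A * q ^ 2 - B * q + C
  have hdisc : 4 * A * C' - B' ^ 2 = 4 * A * C - B ^ 2 := by ring
  have htranslate (x y : ℤ) : A * (x - q * y) ^ 2 + B * (x - q * y) * y + C * y ^ 2 =
      A * x ^ 2 + B' * x * y + C' * y ^ 2 := by
    ring
  have hB' : B' ^ 2 ≤ A ^ 2 := sq_le_sq' (abs_le.mp hq).1 (abs_le.mp hq).2
  rcases le_or_gt A C' with hAC | hCA
  · have hA1 : A = 1 := by nlinarith
    exact ⟨1, 0, by rw [hA1]; ring⟩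
  · have hC' : 0 < C' := by nlinarith
    obtain ⟨x, y, hxy⟩ :=
      exists_eq_one_of_four_mul_sub_sq_lt_twelve C' B' A hC' (by linarith) (by linarith)
    exact ⟨y - q * x, x, by rw [htranslate, ← hxy]; ring⟩
termination_by A.toNat
decreasing_by omega

theorem exists_eq_one_or_eq_neg_one_of_four_mul_sub_sq_lt_twelve (A B C : ℤ)
    (hpos : 0 < 4 * A * C - B ^ 2) (hlt : 4 * A * C - B ^ 2 < 12) :
    ∃ x y : ℤ, A * x ^ 2 + B * x * y + C * y ^ 2 = 1 ∨
      A * x ^ 2 + B * x * y + C * y ^ 2 = -1 := by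
  rcases lt_trichotomy A 0 with hA | rfl | hA
  · obtain ⟨x, y, hxy⟩ := exists_eq_one_of_four_mul_sub_sq_lt_twelve (-A) (-B) (-C)
      (by omega) (by linarith) (by linarith)
    exact ⟨x, y, Or.inr (by linarith)⟩
  · nlinarith
  · obtain ⟨x, y, hxy⟩ := exists_eq_one_of_four_mul_sub_sq_lt_twelve A B C hA hpos hlt
    exact ⟨x, y, Or.inl hxy⟩

section

variable {R : Type*} [CommRing R]

theorem Matrix.of_neg_vecMul_mul (θ : Matrix (Fin 2) (Fin 2) R) (w : Fin 2 → R) :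
    of ![-(w ᵥ* θ), w] * θ = !![θ.trace, θ.det; -1, 0] * of ![-(w ᵥ* θ), w] := by
  ext i j
  fin_cases i <;> fin_cases j <;>
    simp only [Fin.zero_eta, Fin.mk_one, Fin.isValue, mul_apply, of_apply, cons_val', Pi.neg_apply,
      vecMul, dotProduct, Fin.sum_univ_two, cons_val_fin_one, cons_val_zero, cons_val_one,
      trace_fin_two, det_fin_two] <;>
    ring

theorem Matrix.det_of_neg_vecMul (θ : Matrix (Fin 2) (Fin 2) R) (w : Fin 2 → R) :
    (of ![-(w ᵥ* θ), w]).det =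
      θ 0 1 * w 0 ^ 2 + (θ 1 1 - θ 0 0) * w 0 * w 1 - θ 1 0 * w 1 ^ 2 := by
  simp only [det_fin_two, Fin.isValue, of_apply, cons_val', Pi.neg_apply, vecMul, dotProduct,
    Fin.sum_univ_two, cons_val_fin_one, cons_val_zero, cons_val_one]
  ring

end

/-- Every θ ∈ SL₂(ℤ) with trace t ∈ {−1,0,1} is conjugate in GL₂(ℤ)
to the matrix [[t,1],[−1,0]]: there exists U ∈ GL₂(ℤ) with U θ U⁻¹ = [[t,1],[−1,0]]. -/
theorem stmt_6 (θ : Matrix (Fin 2) (Fin 2) ℤ) (hdet : θ.det = 1)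
    (htr : θ.trace = -1 ∨ θ.trace = 0 ∨ θ.trace = 1) :
    ∃ U : Matrix (Fin 2) (Fin 2) ℤ, (U.det = 1 ∨ U.det = -1) ∧
      U * θ * U⁻¹ = !![θ.trace, 1; -1, 0] := by
  have hdisc : 4 * θ 0 1 * -θ 1 0 - (θ 1 1 - θ 0 0) ^ 2 = 4 - θ.trace ^ 2 := by
    rw [trace_fin_two]
    linear_combination 4 * hdet - 4 * det_fin_two θ
  obtain ⟨x, y, hxy⟩ := exists_eq_one_or_eq_neg_one_of_four_mul_sub_sq_lt_twelve
    (θ 0 1) (θ 1 1 - θ 0 0) (-θ 1 0)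
    (by rcases htr with h | h | h <;> rw [hdisc, h] <;> norm_num) (by rw [hdisc]; nlinarith)
  set U := of ![-(![x, y] ᵥ* θ), ![x, y]]
  have hU : U.det = 1 ∨ U.det = -1 := by
    simpa [U, Matrix.det_of_neg_vecMul, sub_eq_add_neg] using hxy
  have hUunit : IsUnit U.det := by rcases hU with h | h <;> simp [h]
  refine ⟨U, hU, ?_⟩
  rw [Matrix.of_neg_vecMul_mul, hdet, mul_nonsing_inv_cancel_right _ _ hUunit]
end

section
/- Let θ ∈ SL₂(ℤ) with trace(θ) ∈ {−1, 0, 1}. Then θ is reversible in GL₂(ℤ): there exists Λ ∈ GL₂(ℤ) such that Λ θ Λ⁻¹ = θ⁻¹. -/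
/-!
Write `θ = !![a, b; c, d]` with `det θ = 1` and `t = tr θ`, so that `θ⁻¹ = adjugate θ` and
`4bc = t² - (a - d)² - 4 < 0` when `t² < 4`. Conjugating by `!![0, -1; 1, k]` and choosing `k`
with `|a - d + 2kc| ≤ |c|` turns `c` into an entry of absolute value `< |c|` as long as
`|c| ≥ 2`; this is the reduction of the definite binary quadratic form `cx² - (a - d)xy - by²`.
Once `|c| = 1`, the involution `!![1, -(a - d)c; 0, -1]` conjugates `θ` to its adjugate, and
being conjugate to one's adjugate is invariant under conjugation.
-/

open Matrix

theorem IsConj.adjugate {n R : Type*} [Fintype n] [DecidableEq n] [CommRing R]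
    {A B : Matrix n n R} (h : IsConj A B) : IsConj A.adjugate B.adjugate := by
  obtain ⟨u, hu⟩ := h
  let v : (Matrix n n R)ˣ :=
    ⟨Matrix.adjugate ↑u, Matrix.adjugate ↑u⁻¹,
      by rw [← adjugate_mul_distrib, u.inv_mul, adjugate_one],
      by rw [← adjugate_mul_distrib, u.mul_inv, adjugate_one]⟩
  refine isConj_comm.1 ⟨v, ?_⟩
  show Matrix.adjugate ↑u * B.adjugate = A.adjugate * Matrix.adjugate ↑u
  rw [← adjugate_mul_distrib, ← adjugate_mul_distrib, hu.eq]

theorem Int.exists_abs_add_two_mul_le (v : ℤ) {c : ℤ} (hc : c ≠ 0) :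
    ∃ k : ℤ, |v + 2 * k * c| ≤ |c| := by
  have h2c : 2 * c ≠ 0 := by positivity
  have hdiv := Int.emod_add_ediv_mul (v + |c|) (2 * c)
  have hlo := Int.emod_nonneg (v + |c|) h2c
  have hhi := Int.emod_lt_abs (v + |c|) h2c
  rw [abs_mul, abs_two] at hhi
  refine ⟨-((v + |c|) / (2 * c)), abs_le.2 ⟨?_, ?_⟩⟩ <;> linarith

namespace Matrix

section CommRing

variable {R : Type*} [CommRing R]

theorem isConj_adjugate_fin_two_of_mul_self_eq_one (a b c d : R) (hc : c * c = 1) :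
    IsConj !![a, b; c, d] (!![a, b; c, d]).adjugate := by
  let s : Matrix (Fin 2) (Fin 2) R := !![1, -(a - d) * c; 0, -1]
  have hs : s * s = 1 := by
    ext i j; fin_cases i <;> fin_cases j <;> simp [s]
  refine ⟨⟨s, s, hs, hs⟩, ?_⟩
  ext i j; fin_cases i <;> fin_cases j <;> simp [s] <;> grind

-- conjugation by `!![0, -1; 1, k]`
theorem isConj_fin_two_reduce (a b c d k : R) :
    IsConj !![a, b; c, d] !![d - k * c, -c; -(b + k * (d - a) - k ^ 2 * c), a + k * c] := by
  refine ⟨⟨!![0, -1; 1, k], !![k, 1; -1, 0], ?_, ?_⟩, ?_⟩ <;>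
    ext i j <;> fin_cases i <;> fin_cases j <;> simp <;> ring

theorem four_mul_mul_eq_trace_sq {θ : Matrix (Fin 2) (Fin 2) R} (hdet : θ.det = 1) :
    4 * (θ 0 1 * θ 1 0) = θ.trace ^ 2 - (θ 0 0 - θ 1 1) ^ 2 - 4 := by
  rw [det_fin_two] at hdet
  rw [trace_fin_two]
  linear_combination (-4) * hdet

end CommRing

section Ordered

variable {R : Type*} [CommRing R] [LinearOrder R] [IsStrictOrderedRing R]

theorem four_mul_mul_neg {θ : Matrix (Fin 2) (Fin 2) R} (hdet : θ.det = 1)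
    (htr : θ.trace ^ 2 < 4) : 4 * (θ 0 1 * θ 1 0) < 0 := by
  rw [four_mul_mul_eq_trace_sq hdet]
  nlinarith [sq_nonneg (θ 0 0 - θ 1 1)]

theorem abs_one_zero_lt {θ : Matrix (Fin 2) (Fin 2) R} (hdet : θ.det = 1)
    (htr : θ.trace ^ 2 < 4) (hdiag : |θ 0 0 - θ 1 1| ≤ |θ 0 1|) (h2 : 2 ≤ |θ 0 1|) :
    |θ 1 0| < |θ 0 1| := by
  by_contra! hle
  have habs : 4 * (|θ 0 1| * |θ 1 0|) = -(4 * (θ 0 1 * θ 1 0)) := by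
    rw [← abs_of_neg (four_mul_mul_neg hdet htr), abs_mul, abs_mul,
      abs_of_pos (four_pos : (0 : R) < 4)]
  have hsq : (θ 0 0 - θ 1 1) ^ 2 ≤ |θ 0 1| ^ 2 :=
    sq_le_sq' (abs_le.1 hdiag).1 (abs_le.1 hdiag).2
  nlinarith [four_mul_mul_eq_trace_sq hdet, sq_nonneg θ.trace,
    mul_le_mul_of_nonneg_left hle (abs_nonneg (θ 0 1))]

end Ordered

theorem isConj_adjugate_of_trace_sq_lt_four (θ : Matrix (Fin 2) (Fin 2) ℤ) (hdet : θ.det = 1)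
    (htr : θ.trace ^ 2 < 4) : IsConj θ θ.adjugate := by
  induction hN : (θ 1 0).natAbs using Nat.strong_induction_on generalizing θ with
  | _ N ih =>
  obtain ⟨a, b, c, d, rfl⟩ : ∃ a b c d, θ = !![a, b; c, d] := ⟨_, _, _, _, eta_fin_two θ⟩
  have hc : c ≠ 0 := by
    rintro rfl
    simpa using four_mul_mul_neg hdet htr
  by_cases hc1 : |c| = 1
  · exact isConj_adjugate_fin_two_of_mul_self_eq_one a b c d
      (by rw [← abs_mul_abs_self, hc1, one_mul])
  have hc2 : 2 ≤ |c| := by have := abs_pos.2 hc; omega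
  obtain ⟨k, hk⟩ := Int.exists_abs_add_two_mul_le (a - d) hc
  set θ' := !![d - k * c, -c; -(b + k * (d - a) - k ^ 2 * c), a + k * c]
  have hconj : IsConj !![a, b; c, d] θ' := isConj_fin_two_reduce a b c d k
  have hdet' : θ'.det = 1 := by
    rw [det_fin_two_of] at hdet ⊢; linear_combination hdet
  have htr' : θ'.trace ^ 2 < 4 := by
    simpa only [θ', trace_fin_two_of, show d - k * c + (a + k * c) = a + d by ring] using htr
  have h01 : |θ' 0 1| = |c| := abs_neg c
  have hdiag : θ' 0 0 - θ' 1 1 = -(a - d + 2 * k * c) := by simp [θ']; ring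
  have hlt : |θ' 1 0| < |c| := by
    rw [← h01]
    exact abs_one_zero_lt hdet' htr' (by rwa [hdiag, abs_neg, h01]) (h01 ▸ hc2)
  have hN' : (θ' 1 0).natAbs < N := by
    rw [← hN]
    exact Int.natAbs_lt_iff_sq_lt.2 (sq_lt_sq.2 hlt)
  exact hconj.trans ((ih _ hN' θ' hdet' htr' rfl).trans hconj.adjugate.symm)

end Matrix

/-- Every θ ∈ SL₂(ℤ) with trace in {−1,0,1} is reversible in GL₂(ℤ):
there exists Λ ∈ GL₂(ℤ) with Λ θ Λ⁻¹ = θ⁻¹. -/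
theorem stmt_7 (θ : Matrix (Fin 2) (Fin 2) ℤ) (hdet : θ.det = 1)
    (htr : θ.trace = -1 ∨ θ.trace = 0 ∨ θ.trace = 1) :
    ∃ Λ : Matrix (Fin 2) (Fin 2) ℤ, (Λ.det = 1 ∨ Λ.det = -1) ∧
      Λ * θ * Λ⁻¹ = θ⁻¹ := by
  have htr4 : θ.trace ^ 2 < 4 := by rcases htr with h | h | h <;> rw [h] <;> norm_num
  obtain ⟨Λ, hΛ⟩ := θ.isConj_adjugate_of_trace_sq_lt_four hdet htr4
  refine ⟨Λ, Int.isUnit_iff.1 ((isUnit_iff_isUnit_det _).1 Λ.isUnit), ?_⟩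
  rw [← coe_units_inv, hΛ.eq, Units.mul_inv_cancel_right, inv_def, hdet, Ring.inverse_one,
    one_smul]
end

section
/- Fix k ∈ ℝ with k ≠ 0, and define the bilinear bracket on ℝ³ by [x, y] := (−k(x₂y₃ − x₃y₂), k(x₁y₃ − x₃y₁), 0) (so that [f₁,f₂] = 0, [f₁,f₃] = k f₂, [f₂,f₃] = −k f₁ for the standard basis f₁, f₂, f₃). An invertible linear map L : ℝ³ → ℝ³ satisfies L[x, y] = [Lx, Ly] for all x, y ∈ ℝ³ if and only if the matrix of L (acting on column vectors, with respect to the standard basis) has the form Pᵉ · [[α, β, γ], [−β, α, δ], [0, 0, 1]], where P = [[0,1,0],[1,0,0],[0,0,−1]], ε ∈ {0,1}, and α, β, γ, δ ∈ ℝ with α² + β² ≠ 0. -/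
/-!
The bracket is `[x, y] = -k · π (x × y)` with `π` the projection onto the first two
coordinates, so it is determined by `[f₁, f₃] = k f₂` and `[f₂, f₃] = -k f₁`. Applying an
automorphism `L` to these two relations forces the last row of `L` to be `(0, 0, c)` and the
upper-left block to be `[[a, b], [-bc, ac]]` with `a = ac²`, `b = bc²`; invertibility gives
`a² + b² ≠ 0`, hence `c = ±1`. For `c = 1` this is the normal form itself; for `c = -1` the
involution `P` (itself an automorphism) brings `L` back to the case `c = 1`.
-/

open Matrix

def Matrix.PreservesBracket {n R : Type*} [Fintype n] [CommSemiring R]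
    (bracket : (n → R) → (n → R) → (n → R)) (L : Matrix n n R) : Prop :=
  ∀ x y, L *ᵥ bracket x y = bracket (L *ᵥ x) (L *ᵥ y)

namespace Matrix.PreservesBracket

variable {n R : Type*} [Fintype n] [DecidableEq n] [CommSemiring R]
  {bracket : (n → R) → (n → R) → (n → R)}

theorem one : PreservesBracket bracket (1 : Matrix n n R) := fun x y => by
  simp only [one_mulVec]

omit [DecidableEq n] in
theorem mul {A B : Matrix n n R} (hA : PreservesBracket bracket A)
    (hB : PreservesBracket bracket B) : PreservesBracket bracket (A * B) := fun x y => by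
  simp only [← mulVec_mulVec, hB x y, hA (B *ᵥ x) (B *ᵥ y)]

theorem pow {A : Matrix n n R} (hA : PreservesBracket bracket A) :
    ∀ m : ℕ, PreservesBracket bracket (A ^ m)
  | 0 => by simpa only [pow_zero] using one
  | m + 1 => by simpa only [pow_succ] using (pow hA m).mul hA

end Matrix.PreservesBracket

def s2Bracket (k : ℝ) (x y : Fin 3 → ℝ) : Fin 3 → ℝ :=
  ![-(k * (x 1 * y 2 - x 2 * y 1)), k * (x 0 * y 2 - x 2 * y 0), 0]

def s2AutForm (α β γ δ : ℝ) : Matrix (Fin 3) (Fin 3) ℝ :=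
  !![α, β, γ; -β, α, δ; 0, 0, 1]

def s2Flip : Matrix (Fin 3) (Fin 3) ℝ :=
  !![0, 1, 0; 1, 0, 0; 0, 0, -1]

theorem s2Flip_mul_self : s2Flip * s2Flip = 1 := by
  ext i j
  fin_cases i <;> fin_cases j <;> simp [s2Flip, mul_apply, Fin.sum_univ_three]

theorem det_s2Flip : s2Flip.det = 1 := by
  simp [s2Flip, det_fin_three]

theorem det_s2AutForm (α β γ δ : ℝ) : (s2AutForm α β γ δ).det = α ^ 2 + β ^ 2 := by
  simp [s2AutForm, det_fin_three, sq]

theorem preservesBracket_s2AutForm (k α β γ δ : ℝ) :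
    PreservesBracket (s2Bracket k) (s2AutForm α β γ δ) := fun x y => by
  funext j
  fin_cases j <;> simp [s2Bracket, s2AutForm, mulVec, dotProduct, Fin.sum_univ_three] <;> ring

theorem preservesBracket_s2Flip (k : ℝ) : PreservesBracket (s2Bracket k) s2Flip := fun x y => by
  funext j
  fin_cases j <;> simp [s2Bracket, s2Flip, mulVec, dotProduct, Fin.sum_univ_three] <;> ring

theorem Matrix.PreservesBracket.s2_entries {k : ℝ} (hk : k ≠ 0) {L : Matrix (Fin 3) (Fin 3) ℝ}
    (hL : PreservesBracket (s2Bracket k) L) :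
    L 2 0 = 0 ∧ L 2 1 = 0 ∧ L 1 1 = L 0 0 * L 2 2 ∧ L 1 0 = -(L 0 1 * L 2 2) ∧
      L 0 0 = L 1 1 * L 2 2 ∧ L 0 1 = -(L 1 0 * L 2 2) := by
  have h02 := congrFun (hL ![1, 0, 0] ![0, 0, 1])
  have h12 := congrFun (hL ![0, 1, 0] ![0, 0, 1])
  have a0 := h02 0
  have a1 := h02 1
  have a2 := h02 2
  have b0 := h12 0
  have b1 := h12 1
  have b2 := h12 2
  simp only [mulVec, dotProduct, s2Bracket, cons_val_one, cons_val_zero, cons_val, mul_one,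
    mul_zero, sub_self, neg_zero, sub_zero, Fin.sum_univ_three, zero_add, add_zero, mul_eq_zero,
    mul_neg, neg_inj, neg_eq_zero] at a0 a1 a2 b0 b1 b2
  have h20 : L 2 0 = 0 := b2.resolve_right hk
  have h21 : L 2 1 = 0 := a2.resolve_right hk
  simp only [h20, h21, zero_mul, sub_zero] at a0 a1 b0 b1
  refine ⟨h20, h21, ?_, ?_, ?_, ?_⟩ <;> apply mul_left_cancel₀ hk
  · linear_combination a1
  · linear_combination -b1
  · linear_combination b0
  · linear_combination a0

theorem Matrix.PreservesBracket.s2_apply_two_two_sq_eq_one {k : ℝ} (hk : k ≠ 0) {L : Matrix (Fin 3) (Fin 3) ℝ}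
    (hL : PreservesBracket (s2Bracket k) L) (hdet : L.det ≠ 0) : L 2 2 ^ 2 = 1 := by
  obtain ⟨h20, h21, h11, h10, h00, h01⟩ := hL.s2_entries hk
  have hdet' : L.det = (L 0 0 ^ 2 + L 0 1 ^ 2) * L 2 2 ^ 2 := by
    rw [det_fin_three, h20, h21, h11, h10]
    ring
  have hprod : (L 0 0 ^ 2 + L 0 1 ^ 2) * (L 2 2 ^ 2 - 1) = 0 := by
    linear_combination (-L 0 0) * h00 - L 0 0 * L 2 2 * h11 + L 0 1 * L 2 2 * h10 - L 0 1 * h01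
  have hsum : L 0 0 ^ 2 + L 0 1 ^ 2 ≠ 0 := fun h => hdet (by rw [hdet', h, zero_mul])
  exact sub_eq_zero.mp ((mul_eq_zero.mp hprod).resolve_left hsum)

theorem Matrix.PreservesBracket.eq_s2AutForm {k : ℝ} (hk : k ≠ 0) {L : Matrix (Fin 3) (Fin 3) ℝ}
    (hL : PreservesBracket (s2Bracket k) L) (h22 : L 2 2 = 1) :
    L = s2AutForm (L 0 0) (L 0 1) (L 0 2) (L 1 2) := by
  obtain ⟨h20, h21, h11, h10, -, -⟩ := hL.s2_entries hk
  ext i j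
  fin_cases i <;> fin_cases j <;> simp [s2AutForm, h20, h21, h11, h10, h22]

theorem Matrix.PreservesBracket.exists_eq_s2AutForm {k : ℝ} (hk : k ≠ 0)
    {L : Matrix (Fin 3) (Fin 3) ℝ} (hL : PreservesBracket (s2Bracket k) L) (hdet : L.det ≠ 0)
    (h22 : L 2 2 = 1) : ∃ α β γ δ : ℝ, α ^ 2 + β ^ 2 ≠ 0 ∧ L = s2AutForm α β γ δ := by
  have hform := hL.eq_s2AutForm hk h22
  exact ⟨_, _, _, _, by rwa [hform, det_s2AutForm] at hdet, hform⟩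

/-- For k ≠ 0 and the bracket [x,y] = (−k(x₂y₃−x₃y₂), k(x₁y₃−x₃y₁), 0)
on ℝ³ (the Lie bracket of 𝔰₂ in the basis f₁,f₂,f₃), an invertible linear map L
(given by its matrix acting on column vectors) preserves the bracket iff its matrix is
Pᵉ·[[α,β,γ],[−β,α,δ],[0,0,1]] with P = [[0,1,0],[1,0,0],[0,0,−1]], ε ∈ {0,1}, and
α,β,γ,δ ∈ ℝ, α²+β² ≠ 0. -/
theorem stmt_9 (k : ℝ) (hk : k ≠ 0)
    (bracket : (Fin 3 → ℝ) → (Fin 3 → ℝ) → (Fin 3 → ℝ))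
    (hbr : ∀ x y : Fin 3 → ℝ,
      bracket x y = ![-(k * (x 1 * y 2 - x 2 * y 1)), k * (x 0 * y 2 - x 2 * y 0), 0])
    (L : Matrix (Fin 3) (Fin 3) ℝ) (hL : IsUnit L.det) :
    (∀ x y : Fin 3 → ℝ, L.mulVec (bracket x y) = bracket (L.mulVec x) (L.mulVec y)) ↔
      ∃ ε : ℕ, ε ∈ ({0, 1} : Set ℕ) ∧ ∃ α β γ δ : ℝ, α ^ 2 + β ^ 2 ≠ 0 ∧
        L = (!![0, 1, 0; 1, 0, 0; 0, 0, -1] : Matrix (Fin 3) (Fin 3) ℝ) ^ ε *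
          !![α, β, γ; -β, α, δ; 0, 0, 1] := by
  obtain rfl : bracket = s2Bracket k := funext fun x => funext (hbr x)
  change PreservesBracket (s2Bracket k) L ↔ _
  constructor
  · intro hpres
    rcases sq_eq_one_iff.mp (hpres.s2_apply_two_two_sq_eq_one hk hL.ne_zero) with h22 | h22
    · obtain ⟨α, β, γ, δ, hαβ, rfl⟩ := hpres.exists_eq_s2AutForm hk hL.ne_zero h22
      exact ⟨0, by simp, α, β, γ, δ, hαβ, by rw [pow_zero, Matrix.one_mul]; rfl⟩
    · have hdet : (s2Flip * L).det ≠ 0 := by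
        rw [det_mul, det_s2Flip, one_mul]
        exact hL.ne_zero
      have h22' : (s2Flip * L) 2 2 = 1 := by
        simp [s2Flip, mul_apply, Fin.sum_univ_three, h22]
      obtain ⟨α, β, γ, δ, hαβ, hform⟩ :=
        ((preservesBracket_s2Flip k).mul hpres).exists_eq_s2AutForm hk hdet h22'
      refine ⟨1, by simp, α, β, γ, δ, hαβ, ?_⟩
      rw [pow_one]
      change L = s2Flip * s2AutForm α β γ δ
      rw [← hform, ← Matrix.mul_assoc, s2Flip_mul_self, Matrix.one_mul]
  · rintro ⟨ε, -, α, β, γ, δ, -, rfl⟩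
    exact ((preservesBracket_s2Flip k).pow ε).mul (preservesBracket_s2AutForm k α β γ δ)
end

section
/- Fix k ∈ ℝ with k ≠ 0 and let ψ_k : ℝ³ × ℝ³ → ℝ³ be defined by ψ_k(u, v) = (u₁ + v₁cos(ku₃) + v₂sin(ku₃), u₂ − v₁sin(ku₃) + v₂cos(ku₃), u₃ + v₃). Let α, β, γ, δ ∈ ℝ with α² + β² ≠ 0 and ε ∈ {0,1}, and define φ : ℝ³ → ℝ³ by: if ε = 0, φ(v) = (αv₁ + βv₂ + (γ/k)sin(kv₃) + (δ/k)(1 − cos(kv₃)), −βv₁ + αv₂ − (γ/k)(1 − cos(kv₃)) + (δ/k)sin(kv₃), v₃); and if ε = 1, φ(v) = (−βv₁ + αv₂ − (γ/k)(1 − cos(kv₃)) + (δ/k)sin(kv₃), αv₁ + βv₂ + (γ/k)sin(kv₃) + (δ/k)(1 − cos(kv₃)), −v₃). Then φ is a bijection of ℝ³ and φ(ψ_k(u, v)) = ψ_k(φ(u), φ(v)) for all u, v ∈ ℝ³; i.e. φ is an automorphism of the group (ℝ³, ψ_k). -/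
open Real

/-!
In complex notation `z = x + i y` the law `ψ_k` reads `(z, t) (z', t') = (z + e^{-ikt} z', t + t')`,
a semidirect product `ℂ ⋊ ℝ`. With `a = α - iβ` and `c = (δ - iγ)/k`, the map `φ` for `ε = 0` is
`(z, t) ↦ (a z + c (1 - e^{-ikt}), t)`: the automorphism `z ↦ a z` (as `a ≠ 0`) followed by
conjugation by `(c, 0)`. For `ε = 1` it is followed in addition by the automorphism
`(x, y, t) ↦ (y, x, -t)`, i.e. `(z, t) ↦ (i z̄, -t)`. Bijectivity and multiplicativity of `φ`
are then those of a composite of group automorphisms.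
-/

@[ext]
structure S2 (k : ℝ) where
  x : ℝ
  y : ℝ
  t : ℝ

namespace S2

variable {k : ℝ}

noncomputable instance : Mul (S2 k) :=
  ⟨fun u v => ⟨u.x + v.x * cos (k * u.t) + v.y * sin (k * u.t),
    u.y - v.x * sin (k * u.t) + v.y * cos (k * u.t), u.t + v.t⟩⟩

instance : One (S2 k) := ⟨⟨0, 0, 0⟩⟩

noncomputable instance : Inv (S2 k) :=
  ⟨fun u => ⟨-(u.x * cos (k * u.t) - u.y * sin (k * u.t)),
    -(u.x * sin (k * u.t) + u.y * cos (k * u.t)), -u.t⟩⟩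

theorem mul_def (u v : S2 k) :
    u * v = ⟨u.x + v.x * cos (k * u.t) + v.y * sin (k * u.t),
      u.y - v.x * sin (k * u.t) + v.y * cos (k * u.t), u.t + v.t⟩ := rfl

theorem one_def : (1 : S2 k) = ⟨0, 0, 0⟩ := rfl

theorem inv_def (u : S2 k) :
    u⁻¹ = ⟨-(u.x * cos (k * u.t) - u.y * sin (k * u.t)),
      -(u.x * sin (k * u.t) + u.y * cos (k * u.t)), -u.t⟩ := rfl

noncomputable instance : Group (S2 k) :=
  Group.ofLeftAxioms
    (fun u v w => by
      ext <;> simp only [mul_def, mul_add, cos_add, sin_add] <;> ring)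
    (fun u => by ext <;> simp [mul_def, one_def])
    (fun u => by
      ext <;> simp only [mul_def, inv_def, one_def, mul_neg, cos_neg, sin_neg] <;> ring)

noncomputable def rotScale (α β : ℝ) (h : α ^ 2 + β ^ 2 ≠ 0) : S2 k ≃* S2 k where
  toFun v := ⟨α * v.x + β * v.y, -β * v.x + α * v.y, v.t⟩
  invFun v := ⟨(α * v.x - β * v.y) / (α ^ 2 + β ^ 2), (β * v.x + α * v.y) / (α ^ 2 + β ^ 2), v.t⟩
  left_inv v := by ext <;> field_simp <;> ring
  right_inv v := by ext <;> field_simp <;> ring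
  map_mul' u v := by ext <;> simp only [mul_def] <;> ring

noncomputable def reflection : S2 k ≃* S2 k where
  toFun v := ⟨v.y, v.x, -v.t⟩
  invFun v := ⟨v.y, v.x, -v.t⟩
  left_inv v := by simp
  right_inv v := by simp
  map_mul' u v := by ext <;> simp only [mul_def, mul_neg, cos_neg, sin_neg, neg_add] <;> ring

theorem conj_mk_zero_apply (p q : ℝ) (v : S2 k) :
    MulAut.conj (⟨p, q, 0⟩ : S2 k) v =
      ⟨v.x + p * (1 - cos (k * v.t)) - q * sin (k * v.t),
        v.y + p * sin (k * v.t) + q * (1 - cos (k * v.t)), v.t⟩ := by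
  ext <;> simp only [MulAut.conj_apply, mul_def, inv_def, mul_zero, cos_zero, sin_zero,
    zero_add] <;> ring

noncomputable def conjRotScale (α β γ δ : ℝ) (h : α ^ 2 + β ^ 2 ≠ 0) : S2 k ≃* S2 k :=
  (rotScale α β h).trans (MulAut.conj (⟨δ / k, -γ / k, 0⟩ : S2 k))

theorem conjRotScale_apply (α β γ δ : ℝ) (h : α ^ 2 + β ^ 2 ≠ 0) (v : S2 k) :
    conjRotScale α β γ δ h v =
      ⟨α * v.x + β * v.y + γ / k * sin (k * v.t) + δ / k * (1 - cos (k * v.t)),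
        -β * v.x + α * v.y - γ / k * (1 - cos (k * v.t)) + δ / k * sin (k * v.t), v.t⟩ := by
  ext <;> simp only [conjRotScale, rotScale, MulEquiv.trans_apply, MulEquiv.coe_mk, Equiv.coe_fn_mk,
    conj_mk_zero_apply] <;> ring

def equivProd : S2 k ≃ ℝ × ℝ × ℝ where
  toFun v := (v.x, v.y, v.t)
  invFun p := ⟨p.1, p.2.1, p.2.2⟩

end S2

theorem MulEquiv.bijective_and_map_mul_of_equiv {G X : Type*} [Mul G] (e : G ≃ X) (Φ : G ≃* G)
    {ψ : X → X → X} (hψ : ∀ u v, ψ u v = e (e.symm u * e.symm v))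
    {φ : X → X} (hφ : ∀ v, φ v = e (Φ (e.symm v))) :
    Function.Bijective φ ∧ ∀ u v, φ (ψ u v) = ψ (φ u) (φ v) := by
  refine ⟨?_, fun u v => ?_⟩
  · have : φ = e.symm.trans (Φ.toEquiv.trans e) := funext hφ
    exact this ▸ Equiv.bijective _
  · simp only [hψ, hφ, Equiv.symm_apply_apply, map_mul]

theorem stmt_10_general (k : ℝ)
    (ψ : ℝ × ℝ × ℝ → ℝ × ℝ × ℝ → ℝ × ℝ × ℝ)
    (hψ : ∀ u v : ℝ × ℝ × ℝ,
      ψ u v = (u.1 + v.1 * Real.cos (k * u.2.2) + v.2.1 * Real.sin (k * u.2.2),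
               u.2.1 - v.1 * Real.sin (k * u.2.2) + v.2.1 * Real.cos (k * u.2.2),
               u.2.2 + v.2.2))
    (α β γ δ : ℝ) (hαβ : α ^ 2 + β ^ 2 ≠ 0) (ε : ℕ) (hε : ε ∈ ({0, 1} : Set ℕ))
    (φ : ℝ × ℝ × ℝ → ℝ × ℝ × ℝ)
    (hφ0 : ε = 0 → ∀ v : ℝ × ℝ × ℝ,
      φ v = (α * v.1 + β * v.2.1 + (γ / k) * Real.sin (k * v.2.2)
               + (δ / k) * (1 - Real.cos (k * v.2.2)),
             -β * v.1 + α * v.2.1 - (γ / k) * (1 - Real.cos (k * v.2.2))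
               + (δ / k) * Real.sin (k * v.2.2),
             v.2.2))
    (hφ1 : ε = 1 → ∀ v : ℝ × ℝ × ℝ,
      φ v = (-β * v.1 + α * v.2.1 - (γ / k) * (1 - Real.cos (k * v.2.2))
               + (δ / k) * Real.sin (k * v.2.2),
             α * v.1 + β * v.2.1 + (γ / k) * Real.sin (k * v.2.2)
               + (δ / k) * (1 - Real.cos (k * v.2.2)),
             -v.2.2)) :
    Function.Bijective φ ∧ ∀ u v : ℝ × ℝ × ℝ, φ (ψ u v) = ψ (φ u) (φ v) := by
  have hψ_mul (u v : ℝ × ℝ × ℝ) :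
      ψ u v = S2.equivProd (S2.equivProd.symm u * S2.equivProd.symm v) :=
    hψ u v
  obtain rfl | rfl : ε = 0 ∨ ε = 1 := hε
  · refine (S2.conjRotScale α β γ δ hαβ).bijective_and_map_mul_of_equiv _ hψ_mul fun v => ?_
    rw [hφ0 rfl, S2.conjRotScale_apply]
    rfl
  · refine ((S2.conjRotScale α β γ δ hαβ).trans S2.reflection).bijective_and_map_mul_of_equiv _
      hψ_mul fun v => ?_
    rw [hφ1 rfl, MulEquiv.trans_apply, S2.conjRotScale_apply]
    rfl

/-- For k ≠ 0 with group operation ψ_k on ℝ³, the map φ determined by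
ε ∈ {0,1} and α,β,γ,δ ∈ ℝ with α²+β² ≠ 0 (by the two displayed formulas) is a
bijection of ℝ³ and an automorphism of the group (ℝ³, ψ_k). -/
theorem stmt_10 (k : ℝ) (hk : k ≠ 0)
    (ψ : ℝ × ℝ × ℝ → ℝ × ℝ × ℝ → ℝ × ℝ × ℝ)
    (hψ : ∀ u v : ℝ × ℝ × ℝ,
      ψ u v = (u.1 + v.1 * Real.cos (k * u.2.2) + v.2.1 * Real.sin (k * u.2.2),
               u.2.1 - v.1 * Real.sin (k * u.2.2) + v.2.1 * Real.cos (k * u.2.2),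
               u.2.2 + v.2.2))
    (α β γ δ : ℝ) (hαβ : α ^ 2 + β ^ 2 ≠ 0) (ε : ℕ) (hε : ε ∈ ({0, 1} : Set ℕ))
    (φ : ℝ × ℝ × ℝ → ℝ × ℝ × ℝ)
    (hφ0 : ε = 0 → ∀ v : ℝ × ℝ × ℝ,
      φ v = (α * v.1 + β * v.2.1 + (γ / k) * Real.sin (k * v.2.2)
               + (δ / k) * (1 - Real.cos (k * v.2.2)),
             -β * v.1 + α * v.2.1 - (γ / k) * (1 - Real.cos (k * v.2.2))
               + (δ / k) * Real.sin (k * v.2.2),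
             v.2.2))
    (hφ1 : ε = 1 → ∀ v : ℝ × ℝ × ℝ,
      φ v = (-β * v.1 + α * v.2.1 - (γ / k) * (1 - Real.cos (k * v.2.2))
               + (δ / k) * Real.sin (k * v.2.2),
             α * v.1 + β * v.2.1 + (γ / k) * Real.sin (k * v.2.2)
               + (δ / k) * (1 - Real.cos (k * v.2.2)),
             -v.2.2)) :
    Function.Bijective φ ∧ ∀ u v : ℝ × ℝ × ℝ, φ (ψ u v) = ψ (φ u) (φ v) :=
  stmt_10_general k ψ hψ α β γ δ hαβ ε hε φ hφ0 hφ1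
end

section
/- Fix k ∈ ℝ with k ≠ 0 and let ψ_k : ℝ³ × ℝ³ → ℝ³ be defined by ψ_k(u, v) = (u₁ + v₁cos(ku₃) + v₂sin(ku₃), u₂ − v₁sin(ku₃) + v₂cos(ku₃), u₃ + v₃). Define F(k, t) ∈ M₂(ℝ) by F(k, t) = (1/(kt))·[[sin(kt), 1 − cos(kt)], [−(1 − cos(kt)), sin(kt)]] for t ≠ 0 and F(k, 0) = I₂, and define the exponential map E : ℝ³ → ℝ³ by E(u₁, u₂, u₃) = (first two components F(k, u₃)·(u₁, u₂)ᵀ, third component u₃). Then for every u ∈ ℝ³ and all s, t ∈ ℝ one has ψ_k(E(t·u), E(s·u)) = E((t + s)·u); i.e. t ↦ E(t·u) is a one-parameter subgroup of the group (ℝ³, ψ_k). -/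
/-!
For `u = (a, b, c)` with `c ≠ 0`, the curve `t ↦ E (t • u)` is the rotation group about the point
`(b / (k c), -a / (k c))`, i.e. the vertical one-parameter subgroup `h ↦ (0, 0, h)` conjugated by a
horizontal translation, so it is again a one-parameter subgroup. For `c = 0` the curve is the line
`t ↦ (t a, t b, 0)` inside the plane `ℝ² × {0}`, on which `ψ_k` is plain addition.
-/

open Real

noncomputable section

namespace SolvableS2

def mul (k : ℝ) (u v : ℝ × ℝ × ℝ) : ℝ × ℝ × ℝ :=
  (u.1 + v.1 * cos (k * u.2.2) + v.2.1 * sin (k * u.2.2),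
   u.2.1 - v.1 * sin (k * u.2.2) + v.2.1 * cos (k * u.2.2),
   u.2.2 + v.2.2)

def expFactor (k t : ℝ) : Matrix (Fin 2) (Fin 2) ℝ :=
  if t = 0 then 1 else
    (1 / (k * t)) • !![sin (k * t), 1 - cos (k * t); -(1 - cos (k * t)), sin (k * t)]

def expMap (k : ℝ) (u : ℝ × ℝ × ℝ) : ℝ × ℝ × ℝ :=
  (expFactor k u.2.2 0 0 * u.1 + expFactor k u.2.2 0 1 * u.2.1,
   expFactor k u.2.2 1 0 * u.1 + expFactor k u.2.2 1 1 * u.2.1,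
   u.2.2)

/-- The conjugate `(p, q, 0) * (0, 0, h) * (p, q, 0)⁻¹` in `S₂`. -/
def rotAbout (k p q h : ℝ) : ℝ × ℝ × ℝ :=
  (p - (p * cos (k * h) + q * sin (k * h)), q - (-(p * sin (k * h)) + q * cos (k * h)), h)

theorem mul_of_height_eq_zero (k x y : ℝ) (v : ℝ × ℝ × ℝ) :
    mul k (x, y, 0) v = (x + v.1, y + v.2.1, v.2.2) := by
  simp [mul]

theorem mul_rotAbout (k p q h h' : ℝ) :
    mul k (rotAbout k p q h) (rotAbout k p q h') = rotAbout k p q (h + h') := by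
  simp only [mul, rotAbout, mul_add, sin_add, cos_add, Prod.mk.injEq]
  refine ⟨?_, ?_, trivial⟩ <;> ring

theorem expMap_smul_of_height_eq_zero (k a b r : ℝ) :
    expMap k (r • (a, b, 0)) = (r * a, r * b, 0) := by
  simp [expMap, expFactor]

theorem expMap_smul {k c : ℝ} (hk : k ≠ 0) (hc : c ≠ 0) (a b r : ℝ) :
    expMap k (r • (a, b, c)) = rotAbout k (b / (k * c)) (-a / (k * c)) (r * c) := by
  rcases eq_or_ne r 0 with rfl | hr
  · simp [expMap, expFactor, rotAbout]
  · simp only [expMap, expFactor, rotAbout, Prod.smul_mk, smul_eq_mul, mul_ne_zero hr hc,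
      if_false, Matrix.smul_apply, Matrix.of_apply, Matrix.cons_val', Matrix.cons_val_zero,
      Matrix.cons_val_one, Matrix.empty_val', Matrix.cons_val_fin_one, Prod.mk.injEq]
    refine ⟨?_, ?_, trivial⟩ <;> field_simp <;> ring

theorem mul_expMap_smul (k : ℝ) (hk : k ≠ 0) (u : ℝ × ℝ × ℝ) (s t : ℝ) :
    mul k (expMap k (t • u)) (expMap k (s • u)) = expMap k ((t + s) • u) := by
  obtain ⟨a, b, c⟩ := u
  rcases eq_or_ne c 0 with rfl | hc
  · simp only [expMap_smul_of_height_eq_zero, mul_of_height_eq_zero, Prod.mk.injEq]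
    refine ⟨?_, ?_, trivial⟩ <;> ring
  · rw [expMap_smul hk hc, expMap_smul hk hc, expMap_smul hk hc, mul_rotAbout, add_mul]

end SolvableS2

end

/-- For k ≠ 0, with ψ_k the group operation of S₂ and E the exponential
map built from F(k,·), the curve t ↦ E(t·u) is a one-parameter subgroup:
ψ_k(E(t·u), E(s·u)) = E((t+s)·u) for all u ∈ ℝ³ and s,t ∈ ℝ. -/
theorem stmt_11 (k : ℝ) (hk : k ≠ 0)
    (ψ : ℝ × ℝ × ℝ → ℝ × ℝ × ℝ → ℝ × ℝ × ℝ)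
    (hψ : ∀ u v : ℝ × ℝ × ℝ,
      ψ u v = (u.1 + v.1 * Real.cos (k * u.2.2) + v.2.1 * Real.sin (k * u.2.2),
               u.2.1 - v.1 * Real.sin (k * u.2.2) + v.2.1 * Real.cos (k * u.2.2),
               u.2.2 + v.2.2))
    (F : ℝ → Matrix (Fin 2) (Fin 2) ℝ)
    (hF0 : F 0 = 1)
    (hF : ∀ t : ℝ, t ≠ 0 →
      F t = (1 / (k * t)) •
        !![Real.sin (k * t), 1 - Real.cos (k * t);
           -(1 - Real.cos (k * t)), Real.sin (k * t)])
    (E : ℝ × ℝ × ℝ → ℝ × ℝ × ℝ)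
    (hE : ∀ u : ℝ × ℝ × ℝ,
      E u = (F u.2.2 0 0 * u.1 + F u.2.2 0 1 * u.2.1,
             F u.2.2 1 0 * u.1 + F u.2.2 1 1 * u.2.1,
             u.2.2)) :
    ∀ (u : ℝ × ℝ × ℝ) (s t : ℝ), ψ (E (t • u)) (E (s • u)) = E ((t + s) • u) := by
  have hF' : F = SolvableS2.expFactor k := funext fun t => by
    by_cases ht : t = 0
    · simp [SolvableS2.expFactor, ht, hF0]
    · simp [SolvableS2.expFactor, ht, hF t ht]
  have hψ' : ψ = SolvableS2.mul k := funext₂ hψ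
  have hE' : E = SolvableS2.expMap k := funext fun u => by rw [hE, hF', SolvableS2.expMap]
  subst hψ' hE'
  exact SolvableS2.mul_expMap_smul k hk
end

section
/- Fix k ∈ ℝ with k ≠ 0 and let B = [[0, k], [−k, 0]]. For every t ∈ ℝ, the series Σ_{j=0}^∞ (tB)ʲ/(j+1)! converges and equals F(k, t), where F(k, t) = (1/(kt))·[[sin(kt), 1 − cos(kt)], [−(1 − cos(kt)), sin(kt)]] for t ≠ 0 and F(k, 0) = I₂. -/
/-!
Writing `x = k t`, the matrix `A = t B` satisfies `A ^ 2 = -x² • 1`, so the even powers of `A` are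
scalars and the odd ones are scalar multiples of `A`. Splitting the series into its even and odd
parts thus reduces it to the two scalar series `∑ (-x²)ᵐ / (2m+1)! = sin x / x` and
`∑ (-x²)ᵐ / (2m+2)! = (1 - cos x) / x²`, i.e. to the Taylor series of `sin` and `cos`.
-/

namespace Real

theorem hasSum_neg_sq_pow_div_factorial_odd {x : ℝ} (hx : x ≠ 0) :
    HasSum (fun m : ℕ => (-x ^ 2) ^ m / ((2 * m + 1).factorial : ℝ)) (sin x / x) := by
  refine ((hasSum_sin x).div_const x).congr_fun fun m => ?_
  rw [neg_pow, ← pow_mul, pow_succ x]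
  field_simp

theorem hasSum_neg_sq_pow_div_factorial_even_succ {x : ℝ} (hx : x ≠ 0) :
    HasSum (fun m : ℕ => (-x ^ 2) ^ m / ((2 * m + 2).factorial : ℝ)) ((1 - cos x) / x ^ 2) := by
  have htail : HasSum
      (fun m : ℕ => (-1) ^ (m + 1) * x ^ (2 * (m + 1)) / ((2 * (m + 1)).factorial : ℝ))
      (cos x - 1) := by
    simpa using (hasSum_nat_add_iff' 1).mpr (hasSum_cos x)
  have h := htail.neg.div_const (x ^ 2)
  rw [neg_sub] at h
  refine h.congr_fun fun m => ?_
  rw [neg_pow, ← pow_mul, show 2 * (m + 1) = 2 * m + 2 by ring, pow_add x]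
  field_simp
  ring

end Real

theorem Matrix.sq_fin_two_skew {R : Type*} [CommRing R] (x : R) :
    !![0, x; -x, 0] ^ 2 = (-x ^ 2) • (1 : Matrix (Fin 2) (Fin 2) R) := by
  ext i j
  fin_cases i <;> fin_cases j <;> simp [sq]

theorem hasSum_inv_factorial_succ_smul_pow_of_sq_eq {R : Type*} [Semiring R] [Algebra ℝ R]
    [TopologicalSpace R] [ContinuousAdd R] [ContinuousSMul ℝ R] {a : R} {x : ℝ} (hx : x ≠ 0)
    (ha : a ^ 2 = (-x ^ 2) • 1) :
    HasSum (fun j : ℕ => ((j + 1).factorial : ℝ)⁻¹ • a ^ j)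
      ((Real.sin x / x) • 1 + ((1 - Real.cos x) / x ^ 2) • a) := by
  have hpow_even (m : ℕ) : a ^ (2 * m) = (-x ^ 2) ^ m • 1 := by
    rw [pow_mul, ha, smul_pow, one_pow]
  have hpow_odd (m : ℕ) : a ^ (2 * m + 1) = (-x ^ 2) ^ m • a := by
    rw [pow_succ, hpow_even, smul_one_mul]
  refine HasSum.even_add_odd ?_ ?_
  · refine ((Real.hasSum_neg_sq_pow_div_factorial_odd hx).smul_const 1).congr_fun fun m => ?_
    rw [hpow_even, smul_smul, div_eq_inv_mul]
  · refine ((Real.hasSum_neg_sq_pow_div_factorial_even_succ hx).smul_const a).congr_fun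
      fun m => ?_
    rw [hpow_odd, smul_smul, div_eq_inv_mul]

/-- For k ≠ 0, B = [[0,k],[−k,0]] and any t ∈ ℝ, the series
Σ_{j=0}^∞ (tB)ʲ/(j+1)! converges (HasSum) to F(k,t), where F(k,t) is the matrix
(1/(kt))·[[sin kt, 1−cos kt],[−(1−cos kt), sin kt]] for t ≠ 0 and I₂ for t = 0. -/
theorem stmt_12 (k : ℝ) (hk : k ≠ 0)
    (B : Matrix (Fin 2) (Fin 2) ℝ) (hB : B = !![0, k; -k, 0])
    (F : ℝ → Matrix (Fin 2) (Fin 2) ℝ)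
    (hF0 : F 0 = 1)
    (hF : ∀ t : ℝ, t ≠ 0 →
      F t = (1 / (k * t)) •
        !![Real.sin (k * t), 1 - Real.cos (k * t);
           -(1 - Real.cos (k * t)), Real.sin (k * t)]) :
    ∀ t : ℝ,
      HasSum (fun j : ℕ => (((j + 1).factorial : ℝ))⁻¹ • (t • B) ^ j) (F t) := by
  intro t
  rcases eq_or_ne t 0 with rfl | ht
  · rw [hF0]
    refine (hasSum_ite_eq 0 1).congr_fun fun j => ?_
    rcases j with _ | j <;> simp
  have hx : k * t ≠ 0 := mul_ne_zero hk ht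
  have htB : t • B = !![0, k * t; -(k * t), 0] := by
    ext i j
    fin_cases i <;> fin_cases j <;> simp [hB, mul_comm]
  have hFt : F t = (Real.sin (k * t) / (k * t)) • 1
      + ((1 - Real.cos (k * t)) / (k * t) ^ 2) • !![0, k * t; -(k * t), 0] := by
    rw [hF t ht]
    ext i j
    fin_cases i <;> fin_cases j <;> simp [field]
  rw [hFt, htB]
  exact hasSum_inv_factorial_succ_smul_pow_of_sq_eq hx (Matrix.sq_fin_two_skew _)
end

section
/- Fix k ∈ ℝ with k ≠ 0, define F(k, t) ∈ M₂(ℝ) by F(k, t) = (1/(kt))·[[sin(kt), 1 − cos(kt)], [−(1 − cos(kt)), sin(kt)]] for t ≠ 0 and F(k, 0) = I₂, and define E : ℝ³ → ℝ³ by E(u₁, u₂, u₃) = (F(k, u₃)·(u₁, u₂)ᵀ, u₃). Then E is not surjective: for every nonzero integer n, no point (v₁, v₂, 2πn/k) with (v₁, v₂) ≠ (0, 0) lies in the range of E; in particular (1, 0, 2π/k) ∉ range(E). Indeed, if u₃ = 2πn/k with n a nonzero integer then F(k, u₃) is the zero matrix and E(u) = (0, 0, u₃) for all u₁, u₂. 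-/
open Matrix Real

/-! At `u₃ = 2πn/k` the angle `k u₃` is a multiple of `2π`, so `sin (k u₃) = 0` and
`cos (k u₃) = 1`: the matrix `F u₃` vanishes and `E` collapses the whole plane over `u₃`
onto `(0, 0, u₃)`. -/

lemma sin_cos_matrix_eq_zero_of_cos_eq_one {x : ℝ} (h : cos x = 1) :
    !![sin x, 1 - cos x; -(1 - cos x), sin x] = 0 := by
  have hsin : sin x = 0 := sin_eq_zero_iff_cos_eq.mpr (Or.inl h)
  ext i j
  fin_cases i <;> fin_cases j <;> simp [hsin, h]

lemma two_pi_int_div_ne_zero {k : ℝ} (hk : k ≠ 0) {n : ℤ} (hn : n ≠ 0) :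
    2 * π * n / k ≠ 0 := by
  have : (n : ℝ) ≠ 0 := Int.cast_ne_zero.mpr hn
  positivity

lemma cos_mul_two_pi_int_div {k : ℝ} (hk : k ≠ 0) (n : ℤ) :
    cos (k * (2 * π * n / k)) = 1 := by
  rw [mul_div_cancel₀ _ hk, mul_comm, cos_int_mul_two_pi]

section FiberCollapse

variable {F : ℝ → Matrix (Fin 2) (Fin 2) ℝ} {E : ℝ × ℝ × ℝ → ℝ × ℝ × ℝ}
  (hE : ∀ u : ℝ × ℝ × ℝ,
    E u = (F u.2.2 0 0 * u.1 + F u.2.2 0 1 * u.2.1, F u.2.2 1 0 * u.1 + F u.2.2 1 1 * u.2.1,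
      u.2.2))
include hE

lemma apply_eq_of_eq_zero {t : ℝ} (hFt : F t = 0) (u₁ u₂ : ℝ) :
    E (u₁, u₂, t) = (0, 0, t) := by
  simp [hE, hFt]

lemma eq_zero_of_mem_range {t v₁ v₂ : ℝ} (hFt : F t = 0) (hv : (v₁, v₂, t) ∈ Set.range E) :
    (v₁, v₂) = ((0 : ℝ), (0 : ℝ)) := by
  obtain ⟨⟨u₁, u₂, u₃⟩, hu⟩ := hv
  obtain rfl : u₃ = t := by simpa [hE] using congrArg (·.2.2) hu
  rw [apply_eq_of_eq_zero hE hFt, Prod.mk.injEq, Prod.mk.injEq] at hu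
  obtain ⟨rfl, rfl, -⟩ := hu
  rfl

end FiberCollapse

theorem stmt_13_general (k : ℝ) (hk : k ≠ 0)
    (F : ℝ → Matrix (Fin 2) (Fin 2) ℝ)
    (hF : ∀ t : ℝ, t ≠ 0 →
      F t = (1 / (k * t)) •
        !![Real.sin (k * t), 1 - Real.cos (k * t);
           -(1 - Real.cos (k * t)), Real.sin (k * t)])
    (E : ℝ × ℝ × ℝ → ℝ × ℝ × ℝ)
    (hE : ∀ u : ℝ × ℝ × ℝ,
      E u = (F u.2.2 0 0 * u.1 + F u.2.2 0 1 * u.2.1,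
             F u.2.2 1 0 * u.1 + F u.2.2 1 1 * u.2.1,
             u.2.2)) :
    (∀ n : ℤ, n ≠ 0 → F (2 * Real.pi * n / k) = 0 ∧
      ∀ u₁ u₂ : ℝ, E (u₁, u₂, 2 * Real.pi * n / k) = (0, 0, 2 * Real.pi * n / k)) ∧
    (∀ n : ℤ, n ≠ 0 → ∀ v₁ v₂ : ℝ, (v₁, v₂) ≠ ((0 : ℝ), (0 : ℝ)) →
      ((v₁, v₂, 2 * Real.pi * n / k) : ℝ × ℝ × ℝ) ∉ Set.range E) ∧
    ((1, 0, 2 * Real.pi / k) : ℝ × ℝ × ℝ) ∉ Set.range E ∧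
    ¬ Function.Surjective E := by
  have hFzero (n : ℤ) (hn : n ≠ 0) : F (2 * π * n / k) = 0 := by
    rw [hF _ (two_pi_int_div_ne_zero hk hn),
      sin_cos_matrix_eq_zero_of_cos_eq_one (cos_mul_two_pi_int_div hk n), smul_zero]
  have hnotMem (n : ℤ) (hn : n ≠ 0) (v₁ v₂ : ℝ) (hv : (v₁, v₂) ≠ ((0 : ℝ), (0 : ℝ))) :
      ((v₁, v₂, 2 * π * n / k) : ℝ × ℝ × ℝ) ∉ Set.range E :=
    fun hmem => hv (eq_zero_of_mem_range hE (hFzero n hn) hmem)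
  have hone : ((1, 0, 2 * π / k) : ℝ × ℝ × ℝ) ∉ Set.range E := by
    simpa using hnotMem 1 one_ne_zero 1 0 (by simp)
  exact ⟨fun n hn => ⟨hFzero n hn, apply_eq_of_eq_zero hE (hFzero n hn)⟩, hnotMem, hone,
    fun hsurj => hone (hsurj _)⟩

/-- For k ≠ 0 the exponential map E of 𝔰₂ is not surjective: if
u₃ = 2πn/k with n a nonzero integer then F(k,u₃) = 0 and E(u) = (0,0,u₃); hence no
point (v₁,v₂,2πn/k) with (v₁,v₂) ≠ (0,0) is in the range of E; in particular
(1,0,2π/k) ∉ range E. -/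
theorem stmt_13 (k : ℝ) (hk : k ≠ 0)
    (F : ℝ → Matrix (Fin 2) (Fin 2) ℝ)
    (hF0 : F 0 = 1)
    (hF : ∀ t : ℝ, t ≠ 0 →
      F t = (1 / (k * t)) •
        !![Real.sin (k * t), 1 - Real.cos (k * t);
           -(1 - Real.cos (k * t)), Real.sin (k * t)])
    (E : ℝ × ℝ × ℝ → ℝ × ℝ × ℝ)
    (hE : ∀ u : ℝ × ℝ × ℝ,
      E u = (F u.2.2 0 0 * u.1 + F u.2.2 0 1 * u.2.1,
             F u.2.2 1 0 * u.1 + F u.2.2 1 1 * u.2.1,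
             u.2.2)) :
    (∀ n : ℤ, n ≠ 0 → F (2 * Real.pi * n / k) = 0 ∧
      ∀ u₁ u₂ : ℝ, E (u₁, u₂, 2 * Real.pi * n / k) = (0, 0, 2 * Real.pi * n / k)) ∧
    (∀ n : ℤ, n ≠ 0 → ∀ v₁ v₂ : ℝ, (v₁, v₂) ≠ ((0 : ℝ), (0 : ℝ)) →
      ((v₁, v₂, 2 * Real.pi * n / k) : ℝ × ℝ × ℝ) ∉ Set.range E) ∧
    ((1, 0, 2 * Real.pi / k) : ℝ × ℝ × ℝ) ∉ Set.range E ∧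
    ¬ Function.Surjective E :=
  stmt_13_general k hk F hF E hE
end

section
/- Let θ = [[a, b], [c, d]] ∈ SL₂(ℤ) and define the 4×4 real matrices A, B, C by: A has top-left 2×2 block θ, entries A₃₃ = A₃₄ = A₄₄ = 1, and all other entries 0; B = I₄ + E₁₄; C = I₄ + E₂₄ (where E_{ij} is the matrix with 1 in position (i,j) and 0 elsewhere). Then A, B, C are invertible, B and C commute, and the commutators satisfy (A, B) := A⁻¹B⁻¹AB = B^{1−d}·C^{c} and (A, C) := A⁻¹C⁻¹AC = B^{b}·C^{1−a}. -/
/-!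
The matrices `translation x y` form an abelian subgroup isomorphic to `R²`, containing
`B = translation 1 0` and `C = translation 0 1`. The block `[[1,1],[0,1]]` of `A` fixes the
last basis vector, so conjugation by `A` acts on this subgroup through `θ⁻¹` alone; hence
`(A, translation v) = translation ((1 - θ⁻¹) v)`, which for `v = e₁, e₂` are the stated products.
-/

open Matrix

section

variable {R : Type*} [CommRing R]

def translation (x y : R) : Matrix (Fin 4) (Fin 4) R :=
  !![1, 0, 0, x; 0, 1, 0, y; 0, 0, 1, 0; 0, 0, 0, 1]

def blockA (a b c d : R) : Matrix (Fin 4) (Fin 4) R :=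
  !![a, b, 0, 0; c, d, 0, 0; 0, 0, 1, 1; 0, 0, 0, 1]

theorem translation_mul (x y x' y' : R) :
    translation x y * translation x' y' = translation (x + x') (y + y') := by
  ext i j
  fin_cases i <;> fin_cases j <;> simp [translation, mul_apply, Fin.sum_univ_four, add_comm]

theorem translation_zero : translation (0 : R) 0 = 1 := by
  ext i j
  fin_cases i <;> fin_cases j <;> simp [translation, one_apply]

theorem translation_mul_translation_neg (x y : R) :
    translation x y * translation (-x) (-y) = 1 := by
  rw [translation_mul, add_neg_cancel, add_neg_cancel, translation_zero]

theorem translation_inv (x y : R) : (translation x y)⁻¹ = translation (-x) (-y) :=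
  inv_eq_right_inv (translation_mul_translation_neg x y)

theorem isUnit_translation (x y : R) : IsUnit (translation x y) :=
  (isUnit_iff_isUnit_det _).mpr (isUnit_det_of_right_inverse (translation_mul_translation_neg x y))

theorem translation_zpow (x y : R) (n : ℤ) :
    translation x y ^ n = translation (n * x) (n * y) := by
  have hdet := (isUnit_iff_isUnit_det _).mp (isUnit_translation x y)
  induction n using Int.induction_on with
  | zero => simp [translation_zero]
  | succ k ih =>
    rw [zpow_add_one hdet, ih, translation_mul]
    push_cast
    ring_nf
  | pred k ih =>
    rw [zpow_sub_one hdet, ih, translation_inv, translation_mul]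
    push_cast
    ring_nf

theorem one_add_single_zero_three : 1 + single 0 3 (1 : R) = translation 1 0 := by
  ext i j
  fin_cases i <;> fin_cases j <;> simp [translation, one_apply, single]

theorem one_add_single_one_three : 1 + single 1 3 (1 : R) = translation 0 1 := by
  ext i j
  fin_cases i <;> fin_cases j <;> simp [translation, one_apply, single]

theorem det_blockA (a b c d : R) : (blockA a b c d).det = a * d - b * c := by
  simp [blockA, det_succ_row_zero, Fin.sum_univ_succ, Fin.succAbove]
  ring

theorem blockA_mul_translation (a b c d x y : R) :
    blockA a b c d * translation x y = translation (a * x + b * y) (c * x + d * y) * blockA a b c d := by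
  ext i j
  fin_cases i <;> fin_cases j <;> simp [blockA, translation, mul_apply, Fin.sum_univ_four]

theorem inv_blockA_mul_translation_mul_blockA {a b c d : R} (h : a * d - b * c = 1) (x y : R) :
    (blockA a b c d)⁻¹ * translation x y * blockA a b c d
      = translation (d * x - b * y) (a * y - c * x) := by
  have hA : IsUnit (blockA a b c d).det := by rw [det_blockA, h]; exact isUnit_one
  have hxy : translation x y
      = translation (a * (d * x - b * y) + b * (a * y - c * x))
          (c * (d * x - b * y) + d * (a * y - c * x)) := by
    congr 1
    · linear_combination (-x) * h
    · linear_combination (-y) * h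
  rw [hxy, mul_assoc, ← blockA_mul_translation, ← mul_assoc, nonsing_inv_mul _ hA, one_mul]

theorem commutator_blockA_translation {a b c d : R} (h : a * d - b * c = 1) (x y : R) :
    (blockA a b c d)⁻¹ * (translation x y)⁻¹ * blockA a b c d * translation x y
      = translation ((1 - d) * x + b * y) ((1 - a) * y + c * x) := by
  rw [translation_inv, inv_blockA_mul_translation_mul_blockA h, translation_mul]
  congr 1 <;> ring

end

/-- For θ = [[a,b],[c,d]] ∈ SL₂(ℤ) and the 4×4 real matrices A, B, C
(A with top-left block θ, A₃₃ = A₃₄ = A₄₄ = 1; B = I₄ + E₁₄; C = I₄ + E₂₄): A, B, C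
are invertible, B and C commute, and (A,B) = B^{1−d} C^{c}, (A,C) = B^{b} C^{1−a}. -/
theorem stmt_14 (θ : Matrix (Fin 2) (Fin 2) ℤ) (hdet : θ.det = 1)
    (A B C : Matrix (Fin 4) (Fin 4) ℝ)
    (hA : A = !![(θ 0 0 : ℝ), (θ 0 1 : ℝ), 0, 0;
                 (θ 1 0 : ℝ), (θ 1 1 : ℝ), 0, 0;
                 0, 0, 1, 1;
                 0, 0, 0, 1])
    (hB : B = 1 + Matrix.single 0 3 (1 : ℝ))
    (hC : C = 1 + Matrix.single 1 3 (1 : ℝ)) :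
    IsUnit A ∧ IsUnit B ∧ IsUnit C ∧
    B * C = C * B ∧
    A⁻¹ * B⁻¹ * A * B = B ^ ((1 : ℤ) - θ 1 1) * C ^ (θ 1 0 : ℤ) ∧
    A⁻¹ * C⁻¹ * A * C = B ^ (θ 0 1 : ℤ) * C ^ ((1 : ℤ) - θ 0 0) := by
  have hθ : (θ 0 0 : ℝ) * θ 1 1 - θ 0 1 * θ 1 0 = 1 := by
    rw [det_fin_two] at hdet
    exact_mod_cast hdet
  have hA' : A = blockA (θ 0 0 : ℝ) (θ 0 1) (θ 1 0) (θ 1 1) := hA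
  rw [one_add_single_zero_three] at hB
  rw [one_add_single_one_three] at hC
  subst hA' hB hC
  refine ⟨?_, isUnit_translation _ _, isUnit_translation _ _, ?_, ?_, ?_⟩
  · rw [isUnit_iff_isUnit_det, det_blockA, hθ]
    exact isUnit_one
  · rw [translation_mul, translation_mul, add_comm (1 : ℝ), add_comm (0 : ℝ)]
  all_goals
    rw [commutator_blockA_translation hθ, translation_zpow, translation_zpow, translation_mul]
    congr 1 <;> push_cast <;> ring
end

section
/- Let θ = [[a, b], [c, d]] ∈ SL₂(ℤ) and let A, B, C be the 4×4 real matrices: A with top-left 2×2 block θ, entries A₃₃ = A₃₄ = A₄₄ = 1, other entries 0; B = I₄ + E₁₄; C = I₄ + E₂₄. Then the subgroup D_m of GL₄(ℝ) generated by {A, B, C} equals {A^Q B^M C^N : Q, M, N ∈ ℤ}, and for Q, M, N ∈ ℤ the element A^Q B^M C^N is the 4×4 matrix with top-left 2×2 block θ^Q, with fourth column ((θ^Q·(M, N)ᵀ)₁, (θ^Q·(M, N)ᵀ)₂, Q, 1)ᵀ, with (3,3) entry 1, and all other entries 0. Equivalently, with r : ℝ³ → M₄(ℝ) the parametrization r(x)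 having top-left block θ^{x₃} when x₃ ∈ ℤ and fourth column (x₁, x₂, x₃, 1)ᵀ, one has D_m = r(ℤ³): the discrete structure corresponding to D_m is the integer lattice ℤ³. -/
/-!
Write `r(u, q)` for the matrix with top-left block `θ^q`, fourth column `(u, q, 1)` and
`(3, 3)` entry `1`. These multiply like the semidirect product `ℝ² ⋊ ℤ` in which `q` acts by
`θ^q`: `r(u, q) r(u', q') = r(u + θ^q u', q + q')`. As `A`, `B`, `C` are `r(0, 1)`, `r(e₁, 0)`,
`r(e₂, 0)`, this gives `A^Q B^M C^N = r(θ^Q (M, N), Q)`. Since `θ ∈ SL₂(ℤ)`, every `θ^q`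
preserves `ℤ²`, so the `r(v, q)` with `v ∈ ℤ²` form a subgroup. It contains `A`, `B`, `C`, and
each of its elements is `A^q B^M C^N` with `(M, N) = θ^{-q} v`; hence it is the group
generated by `A`, `B`, `C`.
-/

open Matrix

lemma Units.val_zpow_eq_of_succ {M : Type*} [Monoid M] (u : Mˣ) {f : ℤ → M} (h0 : f 0 = 1)
    (hsucc : ∀ n, f (n + 1) = f n * u) (n : ℤ) : ((u ^ n : Mˣ) : M) = f n := by
  induction n using Int.induction_on with
  | zero => simpa using h0.symm
  | succ n ih => rw [_root_.zpow_add_one, Units.val_mul, ih, hsucc]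
  | pred n ih =>
    have h := hsucc (-n - 1)
    rw [sub_add_cancel] at h
    rw [_root_.zpow_sub_one, Units.val_mul, ih, h, mul_assoc, Units.mul_inv, mul_one]

theorem Matrix.GeneralLinearGroup.map_intCast_zpow_mulVec {n R : Type*} [Fintype n]
    [DecidableEq n] [CommRing R] (g : GL n ℤ) (q : ℤ) (v : n → ℤ) :
    ((map (Int.castRingHom R) g ^ q : GL n R) : Matrix n n R) *ᵥ (Int.cast ∘ v) =
      Int.cast ∘ (((g ^ q : GL n ℤ) : Matrix n n ℤ) *ᵥ v) := by
  rw [← map_zpow]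
  funext i
  exact (RingHom.map_mulVec (Int.castRingHom R) _ v i).symm

/-- The paper's `r(u₀, u₁, q)`: the element `(u, q)` of `ℝ² ⋊ ℤ`, where `q` acts by `η ^ q`. -/
noncomputable def semidirectMatrix (η : GL (Fin 2) ℝ) (q : ℤ) (u : Fin 2 → ℝ) :
    Matrix (Fin 4) (Fin 4) ℝ :=
  !![(η ^ q : GL (Fin 2) ℝ) 0 0, (η ^ q : GL (Fin 2) ℝ) 0 1, 0, u 0;
     (η ^ q : GL (Fin 2) ℝ) 1 0, (η ^ q : GL (Fin 2) ℝ) 1 1, 0, u 1;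
     0, 0, 1, (q : ℝ);
     0, 0, 0, 1]

section semidirect

variable {η : GL (Fin 2) ℝ}

@[simp]
lemma semidirectMatrix_zero_zero : semidirectMatrix η 0 0 = 1 := by
  ext i j
  fin_cases i <;> fin_cases j <;> simp [semidirectMatrix, one_apply]

lemma semidirectMatrix_mul_semidirectMatrix (q q' : ℤ) (u u' : Fin 2 → ℝ) :
    semidirectMatrix η q u * semidirectMatrix η q' u' =
      semidirectMatrix η (q + q') ((η ^ q : GL (Fin 2) ℝ) *ᵥ u' + u) := by
  simp only [semidirectMatrix, _root_.zpow_add, Units.val_mul]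
  ext i j
  fin_cases i <;> fin_cases j <;> simp [mul_apply, Fin.sum_univ_four, add_comm]

lemma val_zpow_of_val_eq_semidirectMatrix_one_zero {A : GL (Fin 4) ℝ}
    (hA : (A : Matrix (Fin 4) (Fin 4) ℝ) = semidirectMatrix η 1 0) (q : ℤ) :
    ((A ^ q : GL (Fin 4) ℝ) : Matrix (Fin 4) (Fin 4) ℝ) = semidirectMatrix η q 0 :=
  Units.val_zpow_eq_of_succ A (f := (semidirectMatrix η · 0)) semidirectMatrix_zero_zero
    (fun n => by rw [hA, semidirectMatrix_mul_semidirectMatrix]; simp) q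

lemma val_zpow_of_val_eq_semidirectMatrix_zero {B : GL (Fin 4) ℝ} {w : Fin 2 → ℝ}
    (hB : (B : Matrix (Fin 4) (Fin 4) ℝ) = semidirectMatrix η 0 w) (m : ℤ) :
    ((B ^ m : GL (Fin 4) ℝ) : Matrix (Fin 4) (Fin 4) ℝ) = semidirectMatrix η 0 (m • w) :=
  Units.val_zpow_eq_of_succ B (f := fun m => semidirectMatrix η 0 (m • w)) (by simp)
    (fun n => by rw [hB, semidirectMatrix_mul_semidirectMatrix]; simp [add_smul, add_comm]) m

structure IsStandardGenerators (η : GL (Fin 2) ℝ) (A B C : GL (Fin 4) ℝ) : Prop where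
  val_A : (A : Matrix (Fin 4) (Fin 4) ℝ) = semidirectMatrix η 1 0
  val_B : (B : Matrix (Fin 4) (Fin 4) ℝ) = semidirectMatrix η 0 ![1, 0]
  val_C : (C : Matrix (Fin 4) (Fin 4) ℝ) = semidirectMatrix η 0 ![0, 1]

lemma IsStandardGenerators.val_zpow_mul_zpow_mul_zpow {A B C : GL (Fin 4) ℝ}
    (h : IsStandardGenerators η A B C) (Q M N : ℤ) :
    ((A ^ Q * B ^ M * C ^ N : GL (Fin 4) ℝ) : Matrix (Fin 4) (Fin 4) ℝ) =
      semidirectMatrix η Q ((η ^ Q : GL (Fin 2) ℝ) *ᵥ ![(M : ℝ), (N : ℝ)]) := by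
  rw [Units.val_mul, Units.val_mul, val_zpow_of_val_eq_semidirectMatrix_one_zero h.val_A,
    val_zpow_of_val_eq_semidirectMatrix_zero h.val_B,
    val_zpow_of_val_eq_semidirectMatrix_zero h.val_C, semidirectMatrix_mul_semidirectMatrix,
    semidirectMatrix_mul_semidirectMatrix]
  simp only [add_zero, ← mulVec_add]
  congr 2
  ext i
  fin_cases i <;> simp

end semidirect

section lattice

open GeneralLinearGroup

def latticeSubgroup (g : GL (Fin 2) ℤ) : Subgroup (GL (Fin 4) ℝ) where
  carrier := {u | ∃ (q : ℤ) (v : Fin 2 → ℤ),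
    (u : Matrix (Fin 4) (Fin 4) ℝ) = semidirectMatrix (map (Int.castRingHom ℝ) g) q (Int.cast ∘ v)}
  one_mem' := ⟨0, 0, by simp⟩
  mul_mem' := by
    rintro _ _ ⟨q, v, hv⟩ ⟨q', v', hv'⟩
    refine ⟨q + q', (g ^ q : GL (Fin 2) ℤ) *ᵥ v' + v, ?_⟩
    rw [Units.val_mul, hv, hv', semidirectMatrix_mul_semidirectMatrix,
      map_intCast_zpow_mulVec]
    congr 1
    ext i
    simp only [Pi.add_apply, Function.comp_apply, Int.cast_add]
  inv_mem' := by
    rintro u ⟨q, v, hv⟩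
    refine ⟨-q, -((g ^ (-q) : GL (Fin 2) ℤ) *ᵥ v), Units.inv_eq_of_mul_eq_one_left ?_⟩
    rw [hv, semidirectMatrix_mul_semidirectMatrix, map_intCast_zpow_mulVec, neg_add_cancel]
    convert semidirectMatrix_zero_zero using 2
    ext i
    simp only [Pi.add_apply, Function.comp_apply, Pi.neg_apply, Int.cast_neg, add_neg_cancel,
      Pi.zero_apply]

variable {g : GL (Fin 2) ℤ} {A B C : GL (Fin 4) ℝ}

lemma IsStandardGenerators.exists_val_zpow_mul_zpow_mul_zpow_eq
    (h : IsStandardGenerators (map (Int.castRingHom ℝ) g) A B C) (q : ℤ) (v : Fin 2 → ℤ) :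
    ∃ M N : ℤ, ((A ^ q * B ^ M * C ^ N : GL (Fin 4) ℝ) : Matrix (Fin 4) (Fin 4) ℝ) =
      semidirectMatrix (map (Int.castRingHom ℝ) g) q (Int.cast ∘ v) := by
  set w := ((g ^ (-q) : GL (Fin 2) ℤ) : Matrix (Fin 2) (Fin 2) ℤ) *ᵥ v
  refine ⟨w 0, w 1, ?_⟩
  have hw : ![(w 0 : ℝ), (w 1 : ℝ)] = Int.cast ∘ w := by
    ext i
    fin_cases i <;> rfl
  rw [h.val_zpow_mul_zpow_mul_zpow, hw, map_intCast_zpow_mulVec, mulVec_mulVec,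
    ← Units.val_mul, _root_.zpow_neg, mul_inv_cancel, Units.val_one, one_mulVec]

lemma IsStandardGenerators.zpow_mul_zpow_mul_zpow_mem_latticeSubgroup
    (h : IsStandardGenerators (map (Int.castRingHom ℝ) g) A B C) (Q M N : ℤ) :
    A ^ Q * B ^ M * C ^ N ∈ latticeSubgroup g := by
  refine ⟨Q, (g ^ Q : GL (Fin 2) ℤ) *ᵥ ![M, N], ?_⟩
  rw [h.val_zpow_mul_zpow_mul_zpow, ← map_intCast_zpow_mulVec]
  congr 2
  ext i
  fin_cases i <;> rfl

lemma IsStandardGenerators.mem_latticeSubgroup_iff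
    (h : IsStandardGenerators (map (Int.castRingHom ℝ) g) A B C) {u : GL (Fin 4) ℝ} :
    u ∈ latticeSubgroup g ↔ ∃ Q M N : ℤ, u = A ^ Q * B ^ M * C ^ N := by
  constructor
  · rintro ⟨q, v, hv⟩
    obtain ⟨M, N, hMN⟩ := h.exists_val_zpow_mul_zpow_mul_zpow_eq q v
    exact ⟨q, M, N, Units.ext (hv.trans hMN.symm)⟩
  · rintro ⟨Q, M, N, rfl⟩
    exact h.zpow_mul_zpow_mul_zpow_mem_latticeSubgroup Q M N

lemma IsStandardGenerators.closure_eq_latticeSubgroup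
    (h : IsStandardGenerators (map (Int.castRingHom ℝ) g) A B C) :
    Subgroup.closure {A, B, C} = latticeSubgroup g := by
  refine le_antisymm (Subgroup.closure_le _ |>.mpr ?_) fun u hu => ?_
  · rintro _ (rfl | rfl | rfl) <;> rw [SetLike.mem_coe, h.mem_latticeSubgroup_iff]
    exacts [⟨1, 0, 0, by simp⟩, ⟨0, 1, 0, by simp⟩, ⟨0, 0, 1, by simp⟩]
  · obtain ⟨Q, M, N, rfl⟩ := h.mem_latticeSubgroup_iff.mp hu
    have mem {x : GL (Fin 4) ℝ} (hx : x ∈ ({A, B, C} : Set _)) : x ∈ Subgroup.closure {A, B, C} :=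
      Subgroup.subset_closure hx
    exact mul_mem (mul_mem (zpow_mem (mem (by simp)) Q) (zpow_mem (mem (by simp)) M))
      (zpow_mem (mem (by simp)) N)

end lattice

/-- For θ ∈ SL₂(ℤ), the subgroup D_m of GL₄(ℝ) generated by A, B, C
equals {A^Q B^M C^N : Q,M,N ∈ ℤ}; each A^Q B^M C^N is the 4×4 matrix with top-left
block θ^Q, fourth column (θ^Q·(M,N)ᵀ, Q, 1)ᵀ and (3,3) entry 1; and hence D_m is the
image r(ℤ³) of the integer lattice under the parametrization r. -/
theorem stmt_15 (θ : Matrix (Fin 2) (Fin 2) ℤ) (hdet : θ.det = 1)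
    (A B C : (Matrix (Fin 4) (Fin 4) ℝ)ˣ)
    (hA : (A : Matrix (Fin 4) (Fin 4) ℝ) =
      !![(θ 0 0 : ℝ), (θ 0 1 : ℝ), 0, 0;
         (θ 1 0 : ℝ), (θ 1 1 : ℝ), 0, 0;
         0, 0, 1, 1;
         0, 0, 0, 1])
    (hB : (B : Matrix (Fin 4) (Fin 4) ℝ) = 1 + Matrix.single 0 3 (1 : ℝ))
    (hC : (C : Matrix (Fin 4) (Fin 4) ℝ) = 1 + Matrix.single 1 3 (1 : ℝ)) :
    ((Subgroup.closure {A, B, C} : Subgroup (Matrix (Fin 4) (Fin 4) ℝ)ˣ) : Set _) =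
      {g : (Matrix (Fin 4) (Fin 4) ℝ)ˣ | ∃ Q M N : ℤ, g = A ^ Q * B ^ M * C ^ N} ∧
    (∀ Q M N : ℤ,
      ((A ^ Q * B ^ M * C ^ N : (Matrix (Fin 4) (Fin 4) ℝ)ˣ) :
          Matrix (Fin 4) (Fin 4) ℝ) =
        !![(θ.map ((↑) : ℤ → ℝ) ^ Q) 0 0, (θ.map ((↑) : ℤ → ℝ) ^ Q) 0 1, 0,
             (θ.map ((↑) : ℤ → ℝ) ^ Q).mulVec ![(M : ℝ), (N : ℝ)] 0;
           (θ.map ((↑) : ℤ → ℝ) ^ Q) 1 0, (θ.map ((↑) : ℤ → ℝ) ^ Q) 1 1, 0,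
             (θ.map ((↑) : ℤ → ℝ) ^ Q).mulVec ![(M : ℝ), (N : ℝ)] 1;
           0, 0, 1, (Q : ℝ);
           0, 0, 0, 1]) ∧
    {m : Matrix (Fin 4) (Fin 4) ℝ |
        ∃ g ∈ Subgroup.closure ({A, B, C} : Set (Matrix (Fin 4) (Fin 4) ℝ)ˣ),
          m = (g : Matrix (Fin 4) (Fin 4) ℝ)} =
      {m : Matrix (Fin 4) (Fin 4) ℝ | ∃ x : ℤ × ℤ × ℤ,
        m = !![(θ.map ((↑) : ℤ → ℝ) ^ x.2.2) 0 0, (θ.map ((↑) : ℤ → ℝ) ^ x.2.2) 0 1,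
                 0, (x.1 : ℝ);
               (θ.map ((↑) : ℤ → ℝ) ^ x.2.2) 1 0, (θ.map ((↑) : ℤ → ℝ) ^ x.2.2) 1 1,
                 0, (x.2.1 : ℝ);
               0, 0, 1, (x.2.2 : ℝ);
               0, 0, 0, 1]} := by
  obtain ⟨g, rfl⟩ : IsUnit θ := (isUnit_iff_isUnit_det θ).mpr (hdet ▸ isUnit_one)
  set η := GeneralLinearGroup.map (Int.castRingHom ℝ) g
  have hpow (q : ℤ) : ((η ^ q : GL (Fin 2) ℝ) : Matrix (Fin 2) (Fin 2) ℝ) =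
      (g : Matrix (Fin 2) (Fin 2) ℤ).map (↑) ^ q := coe_units_zpow η q
  have hgen : IsStandardGenerators η A B C := by
    constructor <;> [rw [hA]; rw [hB]; rw [hC]] <;> ext i j <;> fin_cases i <;> fin_cases j <;>
      simp [semidirectMatrix, η, one_apply]
  have hclosure := hgen.closure_eq_latticeSubgroup
  refine ⟨?_, fun Q M N => ?_, ?_⟩
  · rw [hclosure]
    ext u
    exact hgen.mem_latticeSubgroup_iff
  · rw [hgen.val_zpow_mul_zpow_mul_zpow, semidirectMatrix, hpow]
  · rw [hclosure]
    ext m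
    constructor
    · rintro ⟨u, ⟨q, v, hv⟩, rfl⟩
      exact ⟨(v 0, v 1, q), by rw [hv, semidirectMatrix, hpow]; rfl⟩
    · rintro ⟨⟨a, b, q⟩, rfl⟩
      obtain ⟨M, N, hMN⟩ := hgen.exists_val_zpow_mul_zpow_mul_zpow_eq q ![a, b]
      exact ⟨_, hgen.zpow_mul_zpow_mul_zpow_mem_latticeSubgroup q M N,
        by rw [hMN, semidirectMatrix, hpow]; rfl⟩
end

section
/- Let θ ∈ SL₂(ℤ) and let A, B, C be the 4×4 matrices generating D_m (A with top-left block θ, A₃₃ = A₃₄ = A₄₄ = 1, other entries 0; B = I₄ + E₁₄; C = I₄ + E₂₄). Let g₁ = A^{α₁}B^{β₁}C^{γ₁}, g₂ = A^{α₂}B^{β₂}C^{γ₂}, g₃ = A^{α₃}B^{β₃}C^{γ₃} with αᵢ, βᵢ, γᵢ ∈ ℤ, and suppose gcd(α₁, α₂, α₃) = 1. Then there exist integers β₁′, γ₁′, β₂′, γ₂′, β₃′, γ₃′ such that the subgroup generated by {g₁, g₂, g₃} equals the subgroup generated by {A·B^{β₁′}C^{γ₁′}, B^{β₂′}C^{γ₂′},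 B^{β₃′}C^{γ₃′}}. -/
/-!
The integer shears `B^p C^q` form a subgroup `N` normalised by `A`, so each `gᵢ` lies in the
coset `A^{αᵢ} N` and these cosets multiply by adding exponents. Replacing `gᵢ` by `gᵢ gⱼ^{-q}`
therefore runs the Euclidean algorithm on `(α₁, α₂, α₃)` without changing the generated subgroup;
since the gcd is `1`, it stops at exponents `(±1, 0, 0)`.
-/

open Matrix Pointwise

namespace Subgroup

variable {G : Type*} [Group G]

lemma closure_insert_mul_zpow {y : G} {s : Set G} (hy : y ∈ s) (x : G) (n : ℤ) :
    closure (insert (x * y ^ n) s) = closure (insert x s) := by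
  have hy' : ∀ w, y ∈ closure (insert w s) := fun w => subset_closure (Set.mem_insert_of_mem w hy)
  apply le_antisymm <;> refine (closure_le _).2 (Set.insert_subset_iff.2
    ⟨?_, fun w hw => subset_closure (Set.mem_insert_of_mem _ hw)⟩)
  · exact mul_mem (subset_closure (Set.mem_insert x s)) (zpow_mem (hy' x) n)
  · simpa using mul_mem (subset_closure (Set.mem_insert (x * y ^ n) s)) (zpow_mem (hy' _) (-n))

lemma closure_insert_inv (x : G) (s : Set G) :
    closure (insert x⁻¹ s) = closure (insert x s) := by
  apply le_antisymm <;> refine (closure_le _).2 (Set.insert_subset_iff.2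
    ⟨?_, fun w hw => subset_closure (Set.mem_insert_of_mem _ hw)⟩)
  · exact inv_mem (subset_closure (Set.mem_insert x s))
  · simpa using inv_mem (subset_closure (Set.mem_insert x⁻¹ s))

variable {N : Subgroup G} {a : G}

lemma mul_mem_zpow_smul (ha : a ∈ normalizer N) {x y : G} {k l : ℤ}
    (hx : x ∈ a ^ k • (N : Set G)) (hy : y ∈ a ^ l • (N : Set G)) :
    x * y ∈ a ^ (k + l) • (N : Set G) := by
  simp only [mem_leftCoset_iff, SetLike.mem_coe] at *
  have hconj := (mem_normalizer_iff.1 (zpow_mem ha (-l)) _).1 hx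
  convert mul_mem hconj hy using 1
  group

lemma inv_mem_zpow_smul (ha : a ∈ normalizer N) {x : G} {k : ℤ}
    (hx : x ∈ a ^ k • (N : Set G)) : x⁻¹ ∈ a ^ (-k) • (N : Set G) := by
  simp only [mem_leftCoset_iff, SetLike.mem_coe] at *
  convert (mem_normalizer_iff.1 (zpow_mem ha k) _).1 (inv_mem hx) using 1
  group

lemma zpow_mem_zpow_smul (ha : a ∈ normalizer N) {x : G} {k : ℤ}
    (hx : x ∈ a ^ k • (N : Set G)) (n : ℤ) : x ^ n ∈ a ^ (k * n) • (N : Set G) := by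
  induction n using Int.induction_on with
  | zero => simp
  | succ i ih =>
    rw [_root_.zpow_add_one, mul_add_one]
    exact mul_mem_zpow_smul ha ih hx
  | pred i ih =>
    rw [_root_.zpow_sub_one, mul_sub_one, sub_eq_add_neg]
    exact mul_mem_zpow_smul ha ih (inv_mem_zpow_smul ha hx)

lemma mul_zpow_neg_ediv_mem_emod_smul (ha : a ∈ normalizer N) {x y : G} {k l : ℤ}
    (hx : x ∈ a ^ k • (N : Set G)) (hy : y ∈ a ^ l • (N : Set G)) :
    x * y ^ (-(k / l)) ∈ a ^ (k % l) • (N : Set G) := by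
  have h := mul_mem_zpow_smul ha hx (zpow_mem_zpow_smul ha hy (-(k / l)))
  rwa [show k + l * -(k / l) = k % l by rw [Int.emod_def]; ring] at h

theorem exists_closure_eq_of_gcd_eq_one (ha : a ∈ normalizer N) {x y z : G} {k l m : ℤ}
    (hx : x ∈ a ^ k • (N : Set G)) (hy : y ∈ a ^ l • (N : Set G))
    (hz : z ∈ a ^ m • (N : Set G)) (hklm : Int.gcd (Int.gcd k l) m = 1) :
    ∃ x' ∈ N, ∃ y' ∈ N, ∃ z' ∈ N, closure {x, y, z} = closure {a * x', y', z'} := by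
  by_cases hl : l = 0
  · by_cases hm : m = 0
    · subst hl hm
      have hy' : y ∈ N := by simpa using hy
      have hz' : z ∈ N := by simpa using hz
      obtain rfl | rfl : k = 1 ∨ k = -1 := by simp only [Int.gcd_zero_right] at hklm; omega
      · refine ⟨a⁻¹ * x, (mem_leftCoset_iff a).1 (by simpa using hx), y, hy', z, hz', ?_⟩
        rw [mul_inv_cancel_left]
      · refine ⟨a⁻¹ * x⁻¹, (mem_leftCoset_iff a).1 (by simpa using inv_mem_zpow_smul ha hx),
          y, hy', z, hz', ?_⟩
        rw [mul_inv_cancel_left, closure_insert_inv]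
    · obtain ⟨x', hx', y', hy', z', hz', h⟩ := exists_closure_eq_of_gcd_eq_one ha hz
        (mul_zpow_neg_ediv_mem_emod_smul ha hx hz) hy
        (by rwa [Int.gcd_comm m, Int.gcd_emod, Int.gcd_right_comm])
      refine ⟨x', hx', y', hy', z', hz', ?_⟩
      rw [← h, Set.insert_comm z, closure_insert_mul_zpow (by simp : z ∈ ({z, y} : Set G)),
        Set.pair_comm]
  · obtain ⟨x', hx', y', hy', z', hz', h⟩ := exists_closure_eq_of_gcd_eq_one ha hy
      (mul_zpow_neg_ediv_mem_emod_smul ha hx hy) hz (by rwa [Int.gcd_comm l, Int.gcd_emod])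
    refine ⟨x', hx', y', hy', z', hz', ?_⟩
    rw [← h, Set.insert_comm y, closure_insert_mul_zpow (Set.mem_insert y {z})]
termination_by l.natAbs + m.natAbs
decreasing_by
  · have := Int.emod_lt k hm
    have := Int.emod_nonneg k hm
    omega
  · have := Int.emod_lt k hl
    have := Int.emod_nonneg k hl
    omega

end Subgroup

local notation "M₄" => Matrix (Fin 4) (Fin 4) ℝ

def blockMat (θ : Matrix (Fin 2) (Fin 2) ℤ) : M₄ :=
  !![(θ 0 0 : ℝ), (θ 0 1 : ℝ), 0, 0;
     (θ 1 0 : ℝ), (θ 1 1 : ℝ), 0, 0;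
     0, 0, 1, 1;
     0, 0, 0, 1]

def shearMat (x y : ℝ) : M₄ := 1 + single 0 3 x + single 1 3 y

lemma shearMat_zero : shearMat 0 0 = 1 := by simp [shearMat]

lemma shearMat_mul_shearMat (x y u v : ℝ) :
    shearMat x y * shearMat u v = shearMat (x + u) (y + v) := by
  ext i j
  fin_cases i <;> fin_cases j <;>
    simp [shearMat, mul_apply, Fin.sum_univ_four, single, one_apply] <;> ring

lemma blockMat_mul_shearMat (θ : Matrix (Fin 2) (Fin 2) ℤ) (x y : ℝ) :
    blockMat θ * shearMat x y =
      shearMat (θ 0 0 * x + θ 0 1 * y) (θ 1 0 * x + θ 1 1 * y) * blockMat θ := by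
  ext i j
  fin_cases i <;> fin_cases j <;>
    simp [blockMat, shearMat, mul_apply, Fin.sum_univ_four, single, one_apply]

-- The new coefficients are `adjugate θ = θ⁻¹` applied to `(x, y)`.
lemma shearMat_mul_blockMat {θ : Matrix (Fin 2) (Fin 2) ℤ} (hθ : θ.det = 1) (x y : ℝ) :
    shearMat x y * blockMat θ =
      blockMat θ * shearMat (θ 1 1 * x - θ 0 1 * y) (θ 0 0 * y - θ 1 0 * x) := by
  have hdet : (θ 0 0 : ℝ) * θ 1 1 - θ 0 1 * θ 1 0 = 1 := by
    exact_mod_cast (det_fin_two θ).symm.trans hθ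
  rw [blockMat_mul_shearMat]
  congr 2
  · linear_combination (-x) * hdet
  · linear_combination (-y) * hdet

def intShears : Subgroup M₄ˣ where
  carrier := {g | ∃ p q : ℤ, (g : M₄) = shearMat p q}
  mul_mem' := by
    rintro g h ⟨p, q, hg⟩ ⟨r, s, hh⟩
    exact ⟨p + r, q + s, by rw [Units.val_mul, hg, hh, shearMat_mul_shearMat]; push_cast; rfl⟩
  one_mem' := ⟨0, 0, by simp [shearMat_zero]⟩
  inv_mem' := by
    rintro g ⟨p, q, hg⟩
    refine ⟨-p, -q, Units.inv_eq_of_mul_eq_one_right ?_⟩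
    rw [hg, shearMat_mul_shearMat]
    push_cast
    simp [shearMat_zero]

lemma mem_normalizer_intShears {θ : Matrix (Fin 2) (Fin 2) ℤ} (hθ : θ.det = 1) {A : M₄ˣ}
    (hA : (A : M₄) = blockMat θ) : A ∈ Subgroup.normalizer (intShears : Set M₄ˣ) := by
  refine Subgroup.mem_normalizer_iff.2 fun g => ⟨?_, ?_⟩
  · rintro ⟨p, q, hg⟩
    refine ⟨θ 0 0 * p + θ 0 1 * q, θ 1 0 * p + θ 1 1 * q, ?_⟩
    calc ((A * g * A⁻¹ : M₄ˣ) : M₄) = blockMat θ * shearMat p q * ↑A⁻¹ := by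
          rw [Units.val_mul, Units.val_mul, hA, hg]
      _ = shearMat (θ 0 0 * p + θ 0 1 * q) (θ 1 0 * p + θ 1 1 * q) * (↑A * ↑A⁻¹) := by
          rw [blockMat_mul_shearMat, hA, mul_assoc]
      _ = _ := by rw [Units.mul_inv, mul_one]; push_cast; rfl
  · rintro ⟨p, q, hg⟩
    refine ⟨θ 1 1 * p - θ 0 1 * q, θ 0 0 * q - θ 1 0 * p, ?_⟩
    calc (g : M₄) = ↑A⁻¹ * ((A * g * A⁻¹ : M₄ˣ) : M₄) * ↑A := by simp [mul_assoc]
      _ = ↑A⁻¹ * ↑A * shearMat (θ 1 1 * p - θ 0 1 * q) (θ 0 0 * q - θ 1 0 * p) := by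
          rw [hg, mul_assoc, hA, shearMat_mul_blockMat hθ, ← hA, mul_assoc]
      _ = _ := by rw [Units.inv_mul, one_mul]; push_cast; rfl

lemma val_zpow_of_val_eq_shearMat {u : M₄ˣ} {x y : ℝ} (hu : (u : M₄) = shearMat x y) (n : ℤ) :
    ((u ^ n : M₄ˣ) : M₄) = shearMat (n * x) (n * y) := by
  have hinv : ((u⁻¹ : M₄ˣ) : M₄) = shearMat (-x) (-y) :=
    Units.inv_eq_of_mul_eq_one_right (by rw [hu, shearMat_mul_shearMat]; simp [shearMat_zero])
  induction n using Int.induction_on with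
  | zero => simp [shearMat_zero]
  | succ i ih =>
    rw [_root_.zpow_add_one, Units.val_mul, ih, hu, shearMat_mul_shearMat]
    push_cast; ring_nf
  | pred i ih =>
    rw [_root_.zpow_sub_one, Units.val_mul, ih, hinv, shearMat_mul_shearMat]
    push_cast; ring_nf

lemma mem_intShears_iff {B C : M₄ˣ} (hB : (B : M₄) = shearMat 1 0) (hC : (C : M₄) = shearMat 0 1)
    {g : M₄ˣ} : g ∈ intShears ↔ ∃ p q : ℤ, g = B ^ p * C ^ q := by
  have hval (p q : ℤ) : ((B ^ p * C ^ q : M₄ˣ) : M₄) = shearMat p q := by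
    rw [Units.val_mul, val_zpow_of_val_eq_shearMat hB, val_zpow_of_val_eq_shearMat hC,
      shearMat_mul_shearMat]
    simp
  constructor
  · rintro ⟨p, q, hg⟩
    exact ⟨p, q, Units.ext (hg.trans (hval p q).symm)⟩
  · rintro ⟨p, q, rfl⟩
    exact ⟨p, q, hval p q⟩

/-- (Lemma 5.1) If g₁ = A^{α₁}B^{β₁}C^{γ₁}, g₂ = A^{α₂}B^{β₂}C^{γ₂},
g₃ = A^{α₃}B^{β₃}C^{γ₃} with gcd(α₁,α₂,α₃) = 1, then the subgroup generated by
g₁, g₂, g₃ is also generated by elements A·B^{β₁'}C^{γ₁'}, B^{β₂'}C^{γ₂'},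
B^{β₃'}C^{γ₃'} for some integers βᵢ', γᵢ'. -/
theorem stmt_16 (θ : Matrix (Fin 2) (Fin 2) ℤ) (hdet : θ.det = 1)
    (A B C : (Matrix (Fin 4) (Fin 4) ℝ)ˣ)
    (hA : (A : Matrix (Fin 4) (Fin 4) ℝ) =
      !![(θ 0 0 : ℝ), (θ 0 1 : ℝ), 0, 0;
         (θ 1 0 : ℝ), (θ 1 1 : ℝ), 0, 0;
         0, 0, 1, 1;
         0, 0, 0, 1])
    (hB : (B : Matrix (Fin 4) (Fin 4) ℝ) = 1 + Matrix.single 0 3 (1 : ℝ))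
    (hC : (C : Matrix (Fin 4) (Fin 4) ℝ) = 1 + Matrix.single 1 3 (1 : ℝ))
    (α₁ β₁ γ₁ α₂ β₂ γ₂ α₃ β₃ γ₃ : ℤ)
    (g₁ g₂ g₃ : (Matrix (Fin 4) (Fin 4) ℝ)ˣ)
    (hg₁ : g₁ = A ^ α₁ * B ^ β₁ * C ^ γ₁)
    (hg₂ : g₂ = A ^ α₂ * B ^ β₂ * C ^ γ₂)
    (hg₃ : g₃ = A ^ α₃ * B ^ β₃ * C ^ γ₃)
    (hgcd : Int.gcd (Int.gcd α₁ α₂) α₃ = 1) :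
    ∃ β₁' γ₁' β₂' γ₂' β₃' γ₃' : ℤ,
      Subgroup.closure ({g₁, g₂, g₃} : Set (Matrix (Fin 4) (Fin 4) ℝ)ˣ) =
        Subgroup.closure
          ({A * B ^ β₁' * C ^ γ₁', B ^ β₂' * C ^ γ₂', B ^ β₃' * C ^ γ₃'} :
            Set (Matrix (Fin 4) (Fin 4) ℝ)ˣ) := by
  have hB' : (B : M₄) = shearMat 1 0 := by rw [hB, shearMat, single_zero, add_zero]
  have hC' : (C : M₄) = shearMat 0 1 := by rw [hC, shearMat, single_zero, add_zero]
  have hmem (α β γ : ℤ) : A ^ α * B ^ β * C ^ γ ∈ A ^ α • (intShears : Set M₄ˣ) := by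
    rw [mul_assoc]
    exact Set.smul_mem_smul_set ((mem_intShears_iff hB' hC').2 ⟨β, γ, rfl⟩)
  subst hg₁ hg₂ hg₃
  obtain ⟨x, hx, y, hy, z, hz, h⟩ := Subgroup.exists_closure_eq_of_gcd_eq_one
    (mem_normalizer_intShears hdet hA) (hmem α₁ β₁ γ₁) (hmem α₂ β₂ γ₂) (hmem α₃ β₃ γ₃) hgcd
  obtain ⟨β₁', γ₁', rfl⟩ := (mem_intShears_iff hB' hC').1 hx
  obtain ⟨β₂', γ₂', rfl⟩ := (mem_intShears_iff hB' hC').1 hy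
  obtain ⟨β₃', γ₃', rfl⟩ := (mem_intShears_iff hB' hC').1 hz
  exact ⟨β₁', γ₁', β₂', γ₂', β₃', γ₃', by rw [h, mul_assoc]⟩
end
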